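/- arXiv:math/0202039 — 5 statements merged into one kernel-verified Lean document; each statement's English description precedes it below -/
import Mathlib

section
/- Let f : S → T be an arbitrary map of finite sets. Then there exists a unique Lie algebra homomorphism f^* : 𝔤(T) → 𝔤(S) such that f^*(t_{ij}) = Σ_{p ∈ f⁻¹(i), q ∈ f⁻¹(j)} t_{pq} for all distinct i, j ∈ T (i.e., the relations defining 𝔤(T) are preserved under this assignment on generators). -/
set_option linter.unusedSectionVars false
noncomputable section
attribute [local instance] Classical.propDecidable

/-- Generators `t_{ij}` of the Drinfeld–Kohno Lie algebra: pairs of distinct elements. -/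
def DKGen (T : Type) : Type := {p : T × T // p.1 ≠ p.2}

variable (k : Type) [Field k] [CharZero k]

/-- The relations: `t_{ij} = t_{ji}`, `[t_{ij}, t_{kl}] = 0` for `i,j,k,l` pairwise distinct,
and `[t_{ij}, t_{ik} + t_{jk}] = 0` for `i,j,k` pairwise distinct. -/
def DKRel (T : Type) : Set (FreeLieAlgebra k (DKGen T)) :=
  {x | (∃ (i j : T) (h : i ≠ j),
          x = FreeLieAlgebra.of k (⟨(i, j), h⟩ : DKGen T)
              - FreeLieAlgebra.of k (⟨(j, i), h.symm⟩ : DKGen T))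
     ∨ (∃ (i j l m : T) (hij : i ≠ j) (hlm : l ≠ m),
          i ≠ l ∧ i ≠ m ∧ j ≠ l ∧ j ≠ m ∧
          x = ⁅FreeLieAlgebra.of k (⟨(i, j), hij⟩ : DKGen T),
               FreeLieAlgebra.of k (⟨(l, m), hlm⟩ : DKGen T)⁆)
     ∨ (∃ (i j l : T) (hij : i ≠ j) (hil : i ≠ l) (hjl : j ≠ l),
          x = ⁅FreeLieAlgebra.of k (⟨(i, j), hij⟩ : DKGen T),
               FreeLieAlgebra.of k (⟨(i, l), hil⟩ : DKGen T)
               + FreeLieAlgebra.of k (⟨(j, l), hjl⟩ : DKGen T)⁆)}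

/-- The Lie ideal generated by the relations. -/
def DKIdeal (T : Type) : LieIdeal k (FreeLieAlgebra k (DKGen T)) :=
  LieSubmodule.lieSpan k _ (DKRel k T)

/-- The Drinfeld–Kohno Lie algebra `𝔤(T)`. -/
abbrev DK (T : Type) := FreeLieAlgebra k (DKGen T) ⧸ DKIdeal k T

/-- The generator `t_{ij} ∈ 𝔤(T)` (defined to be `0` when `i = j`). -/
def DKt (T : Type) (i j : T) : DK k T :=
  if h : i = j then 0
  else LieSubmodule.Quotient.mk (N := DKIdeal k T) (FreeLieAlgebra.of k (⟨(i, j), h⟩ : DKGen T))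

/-- `F` is the direct image homomorphism `f_* : 𝔤(S) → 𝔤(T)` along `f : S → T`,
i.e. `F (t_{ij}) = t_{f(i) f(j)}` for all distinct `i, j`. -/
def IsDirectImage {S T : Type} (f : S → T) (F : DK k S →ₗ⁅k⁆ DK k T) : Prop :=
  ∀ i j : S, i ≠ j → F (DKt k S i j) = DKt k T (f i) (f j)

/-- `G` is the inverse image homomorphism `f^* : 𝔤(T) → 𝔤(S)` along `f : S → T`, i.e.
`G (t_{ij}) = ∑_{f(p) = i, f(q) = j} t_{pq}` for all distinct `i, j`. -/
def IsInverseImage {S T : Type} [Fintype S] (f : S → T) (G : DK k T →ₗ⁅k⁆ DK k S) : Prop :=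
  ∀ i j : T, i ≠ j →
    G (DKt k T i j) =
      ∑ p ∈ Finset.univ.filter (fun p => f p = i),
        ∑ q ∈ Finset.univ.filter (fun q => f q = j), DKt k S p q



section Aux

variable {k} {T : Type}

open FreeLieAlgebra LieSubmodule

/-- Auxiliary: sums pull out of brackets on the left. -/
lemma my_sum_lie {L : Type*} [LieRing L] {ι : Type*} (s : Finset ι)
    (f : ι → L) (y : L) : ⁅∑ i ∈ s, f i, y⁆ = ∑ i ∈ s, ⁅f i, y⁆ := by
  classical
  induction s using Finset.induction_on with
  | empty => simp
  | insert a s h ih => simp [Finset.sum_insert h, add_lie, ih]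

/-- Auxiliary: sums pull out of brackets on the right. -/
lemma my_lie_sum {L : Type*} [LieRing L] {ι : Type*} (s : Finset ι)
    (f : ι → L) (y : L) : ⁅y, ∑ i ∈ s, f i⁆ = ∑ i ∈ s, ⁅y, f i⁆ := by
  classical
  induction s using Finset.induction_on with
  | empty => simp
  | insert a s h ih => simp [Finset.sum_insert h, lie_add, ih]

lemma DKt_def (i j : T) (h : i ≠ j) :
    DKt k T i j = LieSubmodule.Quotient.mk (N := DKIdeal k T)
      (FreeLieAlgebra.of k (⟨(i, j), h⟩ : DKGen T)) := by
  rw [DKt, dif_neg h]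

lemma mem_ideal_mk_eq_zero {x : FreeLieAlgebra k (DKGen T)} (hx : x ∈ DKIdeal k T) :
    (LieSubmodule.Quotient.mk (N := DKIdeal k T) x : DK k T) = 0 :=
  (LieSubmodule.Quotient.mk_eq_zero (DKIdeal k T)).2 hx

lemma DKt_symm (i j : T) : DKt k T i j = DKt k T j i := by
  by_cases h : i = j
  · subst h; rfl
  · rw [DKt_def i j h, DKt_def j i (Ne.symm h)]
    rw [← sub_eq_zero]
    exact mem_ideal_mk_eq_zero (LieSubmodule.subset_lieSpan (Or.inl ⟨i, j, h, rfl⟩))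

lemma DKt_comm {i j l m : T} (hij : i ≠ j) (hlm : l ≠ m) (hil : i ≠ l) (him : i ≠ m)
    (hjl : j ≠ l) (hjm : j ≠ m) : ⁅DKt k T i j, DKt k T l m⁆ = 0 := by
  rw [DKt_def i j hij, DKt_def l m hlm, ← LieSubmodule.Quotient.mk_bracket]
  exact mem_ideal_mk_eq_zero (LieSubmodule.subset_lieSpan
    (Or.inr (Or.inl ⟨i, j, l, m, hij, hlm, hil, him, hjl, hjm, rfl⟩)))

lemma DKt_rel3 {i j l : T} (hij : i ≠ j) (hil : i ≠ l) (hjl : j ≠ l) :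
    ⁅DKt k T i j, DKt k T i l + DKt k T j l⁆ = 0 := by
  rw [DKt_def i j hij, DKt_def i l hil, DKt_def j l hjl]
  rw [show (LieSubmodule.Quotient.mk (N := DKIdeal k T)
        (FreeLieAlgebra.of k (⟨(i, l), hil⟩ : DKGen T)) : DK k T)
      + LieSubmodule.Quotient.mk (N := DKIdeal k T)
        (FreeLieAlgebra.of k (⟨(j, l), hjl⟩ : DKGen T))
    = LieSubmodule.Quotient.mk (N := DKIdeal k T)
        (FreeLieAlgebra.of k (⟨(i, l), hil⟩ : DKGen T)
          + FreeLieAlgebra.of k (⟨(j, l), hjl⟩ : DKGen T)) from rfl]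
  erw [← LieSubmodule.Quotient.mk_bracket]
  exact mem_ideal_mk_eq_zero (LieSubmodule.subset_lieSpan
    (Or.inr (Or.inr ⟨i, j, l, hij, hil, hjl, rfl⟩)))

/-- The quotient map as a Lie algebra homomorphism. -/
def DKmk : FreeLieAlgebra k (DKGen T) →ₗ⁅k⁆ DK k T :=
  { (DKIdeal k T : Submodule k (FreeLieAlgebra k (DKGen T))).mkQ with
    map_lie' := fun {_ _} => rfl }

lemma DKmk_apply (x : FreeLieAlgebra k (DKGen T)) :
    (DKmk (k := k) x : DK k T) = LieSubmodule.Quotient.mk (N := DKIdeal k T) x := rfl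

lemma DKmk_surjective : Function.Surjective (DKmk (k := k) (T := T)) :=
  Quot.mk_surjective

/-- Lifting a Lie algebra hom through the quotient. -/
def DKlift {L : Type} [LieRing L] [LieAlgebra k L]
    (Φ : FreeLieAlgebra k (DKGen T) →ₗ⁅k⁆ L)
    (h : ∀ x ∈ DKIdeal k T, Φ x = 0) : DK k T →ₗ⁅k⁆ L :=
  { (DKIdeal k T : Submodule k (FreeLieAlgebra k (DKGen T))).liftQ Φ.toLinearMap
      (fun x hx => h x hx) with
    map_lie' := by
      rintro ⟨x⟩ ⟨y⟩
      exact Φ.map_lie x y }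

lemma DKlift_mk {L : Type} [LieRing L] [LieAlgebra k L]
    (Φ : FreeLieAlgebra k (DKGen T) →ₗ⁅k⁆ L)
    (h : ∀ x ∈ DKIdeal k T, Φ x = 0) (x : FreeLieAlgebra k (DKGen T)) :
    DKlift Φ h (DKmk (k := k) x) = Φ x := rfl

end Aux

/-- for an arbitrary map `f : S → T` of finite sets there is a unique
Lie algebra homomorphism `f^* : 𝔤(T) → 𝔤(S)` with
`f^*(t_{ij}) = ∑_{f(p) = i, f(q) = j} t_{pq}`. -/
theorem inverseImage_existsUnique (S T : Type) [Fintype S] [Fintype T] (f : S → T) :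
    ∃! G : DK k T →ₗ⁅k⁆ DK k S,
      ∀ i j : T, i ≠ j →
        G (DKt k T i j) =
          ∑ p ∈ Finset.univ.filter (fun p => f p = i),
            ∑ q ∈ Finset.univ.filter (fun q => f q = j), DKt k S p q := by
  classical
  let ψ : DKGen T → DK k S := fun g =>
    ∑ p ∈ Finset.univ.filter (fun p => f p = g.1.1),
      ∑ q ∈ Finset.univ.filter (fun q => f q = g.1.2), DKt k S p q
  let Φ : FreeLieAlgebra k (DKGen T) →ₗ⁅k⁆ DK k S := FreeLieAlgebra.lift k ψ
  have hΦof : ∀ (i j : T) (h : i ≠ j),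
      Φ (FreeLieAlgebra.of k (⟨(i, j), h⟩ : DKGen T)) =
        ∑ p ∈ Finset.univ.filter (fun p => f p = i),
          ∑ q ∈ Finset.univ.filter (fun q => f q = j), DKt k S p q := by
    intro i j h
    exact FreeLieAlgebra.lift_of_apply ψ _
  have hrel : ∀ x ∈ DKRel k T, Φ x = 0 := by
    rintro x (⟨i, j, h, rfl⟩ | ⟨i, j, l, m, hij, hlm, hil, him, hjl, hjm, rfl⟩ |
      ⟨i, j, l, hij, hil, hjl, rfl⟩)
    · erw [map_sub, hΦof i j h, hΦof j i h.symm, sub_eq_zero]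
      calc (∑ p ∈ Finset.univ.filter (fun p => f p = i),
              ∑ q ∈ Finset.univ.filter (fun q => f q = j), DKt k S p q)
          = ∑ p ∈ Finset.univ.filter (fun p => f p = i),
              ∑ q ∈ Finset.univ.filter (fun q => f q = j), DKt k S q p :=
            Finset.sum_congr rfl fun p _ => Finset.sum_congr rfl fun q _ => DKt_symm p q
        _ = _ := Finset.sum_comm
    · erw [LieHom.map_lie, hΦof i j hij, hΦof l m hlm, my_sum_lie]
      refine Finset.sum_eq_zero fun p hp => ?_
      rw [my_sum_lie]
      refine Finset.sum_eq_zero fun q hq => ?_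
      rw [my_lie_sum]
      refine Finset.sum_eq_zero fun r hr => ?_
      rw [my_lie_sum]
      refine Finset.sum_eq_zero fun s hs => ?_
      have hfp : f p = i := (Finset.mem_filter.1 hp).2
      have hfq : f q = j := (Finset.mem_filter.1 hq).2
      have hfr : f r = l := (Finset.mem_filter.1 hr).2
      have hfs : f s = m := (Finset.mem_filter.1 hs).2
      exact DKt_comm (fun h => hij (by rw [← hfp, ← hfq, h]))
        (fun h => hlm (by rw [← hfr, ← hfs, h]))
        (fun h => hil (by rw [← hfp, ← hfr, h]))
        (fun h => him (by rw [← hfp, ← hfs, h]))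
        (fun h => hjl (by rw [← hfq, ← hfr, h]))
        (fun h => hjm (by rw [← hfq, ← hfs, h]))
    · erw [LieHom.map_lie, map_add, hΦof i j hij, hΦof i l hil, hΦof j l hjl, my_sum_lie]
      refine Finset.sum_eq_zero fun p hp => ?_
      rw [my_sum_lie]
      refine Finset.sum_eq_zero fun q hq => ?_
      have hfp : f p = i := (Finset.mem_filter.1 hp).2
      have hfq : f q = j := (Finset.mem_filter.1 hq).2
      rw [lie_add, my_lie_sum, my_lie_sum]
      have hz1 : ∀ p' ∈ Finset.univ.filter (fun p' => f p' = i), p' ≠ p →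
          ⁅DKt k S p q, ∑ r ∈ Finset.univ.filter (fun r => f r = l), DKt k S p' r⁆ = 0 := by
        intro p' hp' hne
        rw [my_lie_sum]
        refine Finset.sum_eq_zero fun r hr => ?_
        have hfp' : f p' = i := (Finset.mem_filter.1 hp').2
        have hfr : f r = l := (Finset.mem_filter.1 hr).2
        exact DKt_comm (fun h => hij (by rw [← hfp, ← hfq, h]))
          (fun h => hil (by rw [← hfp', ← hfr, h]))
          (fun h => hne (h.symm))
          (fun h => hil (by rw [← hfp, ← hfr, h]))
          (fun h => (hij (by rw [← hfp', ← hfq, h])).elim)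
          (fun h => hjl (by rw [← hfq, ← hfr, h]))
      have hz2 : ∀ q' ∈ Finset.univ.filter (fun q' => f q' = j), q' ≠ q →
          ⁅DKt k S p q, ∑ r ∈ Finset.univ.filter (fun r => f r = l), DKt k S q' r⁆ = 0 := by
        intro q' hq' hne
        rw [my_lie_sum]
        refine Finset.sum_eq_zero fun r hr => ?_
        have hfq' : f q' = j := (Finset.mem_filter.1 hq').2
        have hfr : f r = l := (Finset.mem_filter.1 hr).2
        exact DKt_comm (fun h => hij (by rw [← hfp, ← hfq, h]))
          (fun h => hjl (by rw [← hfq', ← hfr, h]))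
          (fun h => hij (by rw [← hfp, ← hfq', h]))
          (fun h => hil (by rw [← hfp, ← hfr, h]))
          (fun h => hne (h.symm))
          (fun h => hjl (by rw [← hfq, ← hfr, h]))
      rw [Finset.sum_eq_single_of_mem p
            (Finset.mem_filter.2 ⟨Finset.mem_univ p, hfp⟩) hz1,
          Finset.sum_eq_single_of_mem q
            (Finset.mem_filter.2 ⟨Finset.mem_univ q, hfq⟩) hz2]
      rw [my_lie_sum, my_lie_sum, ← Finset.sum_add_distrib]
      refine Finset.sum_eq_zero fun r hr => ?_
      have hfr : f r = l := (Finset.mem_filter.1 hr).2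
      rw [← lie_add]
      exact DKt_rel3 (fun h => hij (by rw [← hfp, ← hfq, h]))
        (fun h => hil (by rw [← hfp, ← hfr, h]))
        (fun h => hjl (by rw [← hfq, ← hfr, h]))
  have hker : ∀ x ∈ DKIdeal k T, Φ x = 0 := by
    have hle : DKIdeal k T ≤ Φ.ker :=
      LieSubmodule.lieSpan_le.2 (fun x hx => LieHom.mem_ker.2 (hrel x hx))
    exact fun x hx => LieHom.mem_ker.1 (hle hx)
  have hGood : ∀ i j : T, i ≠ j →
      DKlift Φ hker (DKt k T i j) =
        ∑ p ∈ Finset.univ.filter (fun p => f p = i),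
          ∑ q ∈ Finset.univ.filter (fun q => f q = j), DKt k S p q := by
    intro i j hij
    rw [DKt_def i j hij, ← DKmk_apply, DKlift_mk, hΦof i j hij]
  refine ⟨DKlift Φ hker, hGood, ?_⟩
  intro G' hG'
  have key : G'.comp (DKmk (k := k) (T := T)) = (DKlift Φ hker).comp DKmk := by
    apply FreeLieAlgebra.hom_ext
    rintro ⟨⟨i, j⟩, h⟩
    show G' (DKmk (FreeLieAlgebra.of k (⟨(i, j), h⟩ : DKGen T))) =
      DKlift Φ hker (DKmk (FreeLieAlgebra.of k (⟨(i, j), h⟩ : DKGen T)))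
    rw [DKmk_apply, ← DKt_def i j h, hG' i j h, hGood i j h]
  apply LieHom.ext
  intro y
  obtain ⟨x, rfl⟩ := DKmk_surjective (k := k) (T := T) y
  exact LieHom.congr_fun key x
end
end

section
/- Sequential operad associativity for the collection 𝔤(·): let X, Y, Z be finite sets, y ∈ X, z ∈ Y. Then for all a ∈ 𝔤(X), b ∈ 𝔤(Y), c ∈ 𝔤(Z), under the canonical bijection between (((X ∖ {y}) ⊔ Y) ∖ {z}) ⊔ Z and (X ∖ {y}) ⊔ ((Y ∖ {z}) ⊔ Z), one has ∘_z(∘_y(a, b), c) = ∘_y(a, ∘_z(b, c)), where both sides are computed with the insertion maps ∘ defined via p^* and i_*. -/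
noncomputable section
attribute [local instance] Classical.propDecidable

variable (k : Type) [Field k] [CharZero k]

/-- The set `Z = (X ∖ {x}) ⊔ Y` obtained by inserting `Y` at the position `x ∈ X`. -/
abbrev Ins (X : Type) (x : X) (Y : Type) : Type := {a : X // a ≠ x} ⊕ Y

/-- The natural inclusion `i : Y → Z`. -/
abbrev insI (X : Type) (x : X) (Y : Type) : Y → Ins X x Y := Sum.inr

/-- The projection `p : Z → X`, restricting to the inclusion on `X ∖ {x}` and sending all
of `Y` to `x`. -/
abbrev insP (X : Type) (x : X) (Y : Type) : Ins X x Y → X :=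
  Sum.elim Subtype.val (fun _ => x)


/-- The canonical bijection `(((X ∖ {y}) ⊔ Y) ∖ {z}) ⊔ Z ≅ (X ∖ {y}) ⊔ ((Y ∖ {z}) ⊔ Z)`. -/
def seqAssocMap (X Y Z : Type) (y : X) (z : Y) :
    Ins (Ins X y Y) (insI X y Y z) Z → Ins X y (Ins Y z Z)
  | Sum.inr w => Sum.inr (Sum.inr w)
  | Sum.inl ⟨Sum.inl u, _⟩ => Sum.inl u
  | Sum.inl ⟨Sum.inr v, h⟩ => Sum.inr (Sum.inl ⟨v, fun hv => h (by rw [hv])⟩)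

/-! ### Auxiliary lemmas -/

/-- The canonical bijection as an `Equiv`. -/
def seqAssocEquiv (X Y Z : Type) (y : X) (z : Y) :
    Ins (Ins X y Y) (insI X y Y z) Z ≃ Ins X y (Ins Y z Z) where
  toFun := seqAssocMap X Y Z y z
  invFun r := match r with
    | Sum.inl u => Sum.inl ⟨Sum.inl u, by simp⟩
    | Sum.inr (Sum.inl ⟨v, hv⟩) => Sum.inl ⟨Sum.inr v, by simp [hv]⟩
    | Sum.inr (Sum.inr w) => Sum.inr w
  left_inv := by rintro (⟨(u | v), h⟩ | w) <;> rfl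
  right_inv := by rintro (u | (⟨v, hv⟩ | w)) <;> rfl

theorem seqAssoc_comm (X Y Z : Type) (y : X) (z : Y)
    (p : Ins (Ins X y Y) (insI X y Y z) Z) :
    insP X y (Ins Y z Z) (seqAssocMap X Y Z y z p)
      = insP X y Y (insP (Ins X y Y) (insI X y Y z) Z p) := by
  rcases p with (⟨(u | v), h⟩ | w) <;> rfl

theorem DKt_eq_mk (T : Type) {i j : T} (h : i ≠ j) :
    DKt k T i j
      = LieSubmodule.Quotient.mk (N := DKIdeal k T)
          (FreeLieAlgebra.of k (⟨(i, j), h⟩ : DKGen T)) :=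
  dif_neg h

/-- The quotient map as a Lie algebra homomorphism. -/
def DKmkHom (T : Type) : FreeLieAlgebra k (DKGen T) →ₗ⁅k⁆ DK k T :=
  { (LieSubmodule.Quotient.mk' (DKIdeal k T)).toLinearMap with
    map_lie' := fun {_ _} => rfl }

theorem DKhom_ext {T : Type} {L : Type} [LieRing L] [LieAlgebra k L]
    {F G : DK k T →ₗ⁅k⁆ L}
    (h : ∀ (i j : T), i ≠ j → F (DKt k T i j) = G (DKt k T i j)) : F = G := by
  have key : F.comp (DKmkHom k T) = G.comp (DKmkHom k T) := by
    apply (FreeLieAlgebra.lift k).symm.injective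
    rw [FreeLieAlgebra.lift_symm_apply, FreeLieAlgebra.lift_symm_apply]
    funext x
    obtain ⟨⟨i, j⟩, hij⟩ := x
    have := h i j hij
    rw [DKt_eq_mk k T hij] at this
    exact this
  ext x
  obtain ⟨f, rfl⟩ := LieSubmodule.Quotient.surjective_mk' (DKIdeal k T) x
  exact DFunLike.congr_fun key f

theorem lhom_map_sum {L L' : Type} [LieRing L] [LieAlgebra k L] [LieRing L'] [LieAlgebra k L']
    (f : L →ₗ⁅k⁆ L') {ι : Type} (s : Finset ι) (g : ι → L) :
    f (∑ i ∈ s, g i) = ∑ i ∈ s, f (g i) :=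
  map_sum (f : L →ₗ[k] L') g s

/-- Filter with the classical decidability instance, matching the statement's filters. -/
abbrev cfil {α : Type} [Fintype α] (p : α → Prop) : Finset α :=
  @Finset.filter α p (fun a => Classical.propDecidable (p a)) Finset.univ

theorem mem_cfil {α : Type} [Fintype α] {p : α → Prop} {a : α} (h : a ∈ cfil p) : p a :=
  (Finset.mem_filter.mp h).2

theorem sum_fiber_comp {α β γ : Type} [Fintype α] [Fintype β] {M : Type} [AddCommMonoid M]
    (f : α → β) (g : β → γ) (i : γ) (h : α → M) :
    ∑ p ∈ cfil (fun b : β => g b = i), ∑ a ∈ cfil (fun a : α => f a = p), h a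
      = ∑ a ∈ cfil (fun a : α => g (f a) = i), h a := by
  rw [Finset.sum_fiberwise_eq_sum_filter Finset.univ (cfil fun b : β => g b = i) f h]
  refine Finset.sum_congr ?_ fun _ _ => rfl
  ext a
  simp

set_option maxHeartbeats 3200000 in
/-- sequential operad associativity for `𝔤(·)`:
`∘_z(∘_y(a, b), c) = ∘_y(a, ∘_z(b, c))` under the canonical bijection, where each
insertion map is `∘_x(a, b) = p^*(a) + i_*(b)`. -/
theorem insertion_seq_assoc (X Y Z : Type) [Fintype X] [Fintype Y] [Fintype Z]
    (y : X) (z : Y)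
    (PA : DK k X →ₗ⁅k⁆ DK k (Ins X y Y))
    (hPA : IsInverseImage k (insP X y Y) PA)
    (IA : DK k Y →ₗ⁅k⁆ DK k (Ins X y Y))
    (hIA : IsDirectImage k (insI X y Y) IA)
    (PB : DK k (Ins X y Y) →ₗ⁅k⁆ DK k (Ins (Ins X y Y) (insI X y Y z) Z))
    (hPB : IsInverseImage k (insP (Ins X y Y) (insI X y Y z) Z) PB)
    (IB : DK k Z →ₗ⁅k⁆ DK k (Ins (Ins X y Y) (insI X y Y z) Z))
    (hIB : IsDirectImage k (insI (Ins X y Y) (insI X y Y z) Z) IB)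
    (PC : DK k Y →ₗ⁅k⁆ DK k (Ins Y z Z))
    (hPC : IsInverseImage k (insP Y z Z) PC)
    (IC : DK k Z →ₗ⁅k⁆ DK k (Ins Y z Z))
    (hIC : IsDirectImage k (insI Y z Z) IC)
    (PD : DK k X →ₗ⁅k⁆ DK k (Ins X y (Ins Y z Z)))
    (hPD : IsInverseImage k (insP X y (Ins Y z Z)) PD)
    (ID : DK k (Ins Y z Z) →ₗ⁅k⁆ DK k (Ins X y (Ins Y z Z)))
    (hID : IsDirectImage k (insI X y (Ins Y z Z)) ID)
    (E : DK k (Ins (Ins X y Y) (insI X y Y z) Z) →ₗ⁅k⁆ DK k (Ins X y (Ins Y z Z)))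
    (hE : IsDirectImage k (seqAssocMap X Y Z y z) E) :
    ∀ (a : DK k X) (b : DK k Y) (c : DK k Z),
      E (PB (PA a + IA b) + IB c) = PD a + ID (PC b + IC c) := by
  have comm := seqAssoc_comm X Y Z y z
  have happ : ∀ x, seqAssocMap X Y Z y z ((seqAssocEquiv X Y Z y z).symm x) = x :=
    (seqAssocEquiv X Y Z y z).apply_symm_apply
  -- Part 1 : E ∘ PB ∘ PA = PD
  have h1 : E.comp (PB.comp PA) = PD := by
    apply DKhom_ext k
    intro i j hij
    simp only [LieHom.comp_apply]
    rw [hPA i j hij, hPD i j hij]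
    have step1 : PB (∑ p ∈ cfil (fun p => insP X y Y p = i),
          ∑ q ∈ cfil (fun q => insP X y Y q = j), DKt k (Ins X y Y) p q)
        = ∑ p ∈ cfil (fun p => insP X y Y p = i),
          ∑ q ∈ cfil (fun q => insP X y Y q = j),
          ∑ p' ∈ cfil
              (fun p' => insP (Ins X y Y) (insI X y Y z) Z p' = p),
          ∑ q' ∈ cfil
              (fun q' => insP (Ins X y Y) (insI X y Y z) Z q' = q),
            DKt k (Ins (Ins X y Y) (insI X y Y z) Z) p' q' := by
      rw [lhom_map_sum]
      refine Finset.sum_congr rfl fun p hp => ?_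
      rw [lhom_map_sum]
      refine Finset.sum_congr rfl fun q hq => ?_
      have hp' := mem_cfil hp
      have hq' := mem_cfil hq
      exact hPB p q (fun hpq => hij (by rw [← hp', ← hq', hpq]))
    rw [step1]
    have step2 : E (∑ p ∈ cfil (fun p => insP X y Y p = i),
          ∑ q ∈ cfil (fun q => insP X y Y q = j),
          ∑ p' ∈ cfil
              (fun p' => insP (Ins X y Y) (insI X y Y z) Z p' = p),
          ∑ q' ∈ cfil
              (fun q' => insP (Ins X y Y) (insI X y Y z) Z q' = q),
            DKt k (Ins (Ins X y Y) (insI X y Y z) Z) p' q')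
        = ∑ p ∈ cfil (fun p => insP X y Y p = i),
          ∑ q ∈ cfil (fun q => insP X y Y q = j),
          ∑ p' ∈ cfil
              (fun p' => insP (Ins X y Y) (insI X y Y z) Z p' = p),
          ∑ q' ∈ cfil
              (fun q' => insP (Ins X y Y) (insI X y Y z) Z q' = q),
            DKt k (Ins X y (Ins Y z Z))
              (seqAssocMap X Y Z y z p') (seqAssocMap X Y Z y z q') := by
      rw [lhom_map_sum]
      refine Finset.sum_congr rfl fun p hp => ?_
      rw [lhom_map_sum]
      refine Finset.sum_congr rfl fun q hq => ?_
      rw [lhom_map_sum]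
      refine Finset.sum_congr rfl fun p' hp' => ?_
      rw [lhom_map_sum]
      refine Finset.sum_congr rfl fun q' hq' => ?_
      have hp2 := mem_cfil hp'
      have hq2 := mem_cfil hq'
      have hpq := mem_cfil hp
      have hqq := mem_cfil hq
      refine hE p' q' fun hc => hij ?_
      rw [← hpq, ← hqq, ← hp2, ← hq2, hc]
    rw [step2]
    have step3 : ∀ (P : Ins (Ins X y Y) (insI X y Y z) Z → Ins (Ins X y Y) (insI X y Y z) Z
          → DK k (Ins X y (Ins Y z Z))),
        (∑ p ∈ cfil (fun p => insP X y Y p = i),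
          ∑ q ∈ cfil (fun q => insP X y Y q = j),
          ∑ p' ∈ cfil
              (fun p' => insP (Ins X y Y) (insI X y Y z) Z p' = p),
          ∑ q' ∈ cfil
              (fun q' => insP (Ins X y Y) (insI X y Y z) Z q' = q), P p' q')
        = ∑ p' ∈ cfil
              (fun p' => insP X y Y (insP (Ins X y Y) (insI X y Y z) Z p') = i),
          ∑ q' ∈ cfil
              (fun q' => insP X y Y (insP (Ins X y Y) (insI X y Y z) Z q') = j),
            P p' q' := by
      intro P
      rw [← sum_fiber_comp (insP (Ins X y Y) (insI X y Y z) Z) (insP X y Y) i]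
      refine Finset.sum_congr rfl fun p hp => ?_
      rw [Finset.sum_comm]
      exact Finset.sum_congr rfl fun p' _ =>
        sum_fiber_comp (insP (Ins X y Y) (insI X y Y z) Z) (insP X y Y) j _
    rw [step3]
    refine Finset.sum_equiv (seqAssocEquiv X Y Z y z) (fun p' => ?_) (fun p' hp' => ?_)
    · simp only [Finset.mem_filter, Finset.mem_univ, true_and]
      rw [← comm p']
      rfl
    · refine Finset.sum_equiv (seqAssocEquiv X Y Z y z) (fun q' => ?_) (fun q' _ => rfl)
      simp only [Finset.mem_filter, Finset.mem_univ, true_and]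
      rw [← comm q']
      rfl
  -- the filter correspondence used in part 2
  have hfilt : ∀ i : Y,
      (cfil fun p : Ins (Ins X y Y) (insI X y Y z) Z =>
          insP (Ins X y Y) (insI X y Y z) Z p = Sum.inr i)
      = (cfil fun s : Ins Y z Z => insP Y z Z s = i).map
          ⟨fun s => (seqAssocEquiv X Y Z y z).symm (Sum.inr s),
            (Equiv.injective _).comp Sum.inr_injective⟩ := by
    intro i
    ext p
    simp only [Finset.mem_filter, Finset.mem_map, Function.Embedding.coeFn_mk,
      Finset.mem_univ, true_and]
    constructor
    · intro hp
      rcases p with (⟨(u | v), h⟩ | w)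
      · exact absurd hp (by simp)
      · have hvi : v = i := Sum.inr_injective hp
        refine ⟨Sum.inl ⟨v, fun hz => h (by rw [hz])⟩, hvi, rfl⟩
      · have hzi : z = i := Sum.inr_injective hp
        exact ⟨Sum.inr w, hzi, rfl⟩
    · rintro ⟨s, hs, rfl⟩
      rcases s with (⟨v, hv⟩ | w)
      · exact congrArg Sum.inr hs
      · exact congrArg Sum.inr hs
  -- Part 2 : E ∘ PB ∘ IA = ID ∘ PC
  have h2 : E.comp (PB.comp IA) = ID.comp PC := by
    apply DKhom_ext k
    intro i j hij
    simp only [LieHom.comp_apply]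
    rw [hIA i j hij]
    have hij' : (Sum.inr i : Ins X y Y) ≠ Sum.inr j := fun h => hij (Sum.inr_injective h)
    rw [hPB _ _ hij']
    have stepL : E (∑ p ∈ cfil
            (fun p => insP (Ins X y Y) (insI X y Y z) Z p = Sum.inr i),
          ∑ q ∈ cfil
            (fun q => insP (Ins X y Y) (insI X y Y z) Z q = Sum.inr j),
            DKt k (Ins (Ins X y Y) (insI X y Y z) Z) p q)
        = ∑ p ∈ cfil
            (fun p => insP (Ins X y Y) (insI X y Y z) Z p = Sum.inr i),
          ∑ q ∈ cfil
            (fun q => insP (Ins X y Y) (insI X y Y z) Z q = Sum.inr j),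
            DKt k (Ins X y (Ins Y z Z))
              (seqAssocMap X Y Z y z p) (seqAssocMap X Y Z y z q) := by
      rw [lhom_map_sum]
      refine Finset.sum_congr rfl fun p hp => ?_
      rw [lhom_map_sum]
      refine Finset.sum_congr rfl fun q hq => ?_
      have hp' := mem_cfil hp
      have hq' := mem_cfil hq
      exact hE p q (fun hpq => hij' (by rw [← hp', ← hq', hpq]))
    rw [stepL, hPC i j hij]
    have stepR : ID (∑ p ∈ cfil (fun p => insP Y z Z p = i),
          ∑ q ∈ cfil (fun q => insP Y z Z q = j), DKt k (Ins Y z Z) p q)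
        = ∑ p ∈ cfil (fun p => insP Y z Z p = i),
          ∑ q ∈ cfil (fun q => insP Y z Z q = j),
            DKt k (Ins X y (Ins Y z Z)) (Sum.inr p) (Sum.inr q) := by
      rw [lhom_map_sum]
      refine Finset.sum_congr rfl fun p hp => ?_
      rw [lhom_map_sum]
      refine Finset.sum_congr rfl fun q hq => ?_
      have hp' := mem_cfil hp
      have hq' := mem_cfil hq
      exact hID p q (fun hpq => hij (by rw [← hp', ← hq', hpq]))
    rw [stepR, hfilt i, hfilt j]
    rw [Finset.sum_map]
    refine Finset.sum_congr rfl fun p hp => ?_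
    rw [Finset.sum_map]
    refine Finset.sum_congr rfl fun q hq => ?_
    simp only [Function.Embedding.coeFn_mk, happ]
  -- Part 3 : E ∘ IB = ID ∘ IC
  have h3 : E.comp IB = ID.comp IC := by
    apply DKhom_ext k
    intro i j hij
    simp only [LieHom.comp_apply]
    have hij' : (Sum.inr i : Ins (Ins X y Y) (insI X y Y z) Z) ≠ Sum.inr j :=
      fun h => hij (Sum.inr_injective h)
    have hij'' : (Sum.inr i : Ins Y z Z) ≠ Sum.inr j :=
      fun h => hij (Sum.inr_injective h)
    rw [hIB i j hij, hE _ _ hij', hIC i j hij, hID _ _ hij'']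
    rfl
  intro a b c
  simp only [map_add]
  rw [show E (PB (PA a)) = PD a from DFunLike.congr_fun h1 a,
    show E (PB (IA b)) = ID (PC b) from DFunLike.congr_fun h2 b,
    show E (IB c) = ID (IC c) from DFunLike.congr_fun h3 c, add_assoc]
end
end

section
/- Analogue of the Dold–Puppe theorem: let k be a field. Let part denote the category whose objects are finite sets and whose morphisms are partially defined maps (a morphism X → Y is a subset U ⊆ X together with a map U → Y), and let sur denote the category whose objects are finite sets and whose morphisms are surjective (everywhere-defined) maps. Then the category of contravariant functors from part to k-vector spaces is equivalent to the category of contravariant functors from sur to k-vector spaces. -/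
noncomputable section
open CategoryTheory

/-- The category `part` of finite sets and partially defined maps.  A partial map
`X ⇀ Y` (a subset `U ⊆ X` together with a map `U → Y`) is encoded as a total map
`X → Option Y` (`none` outside the domain); composition of partial maps corresponds to
`Option.bind`. -/
structure FinPart where
  carrier : Type
  [fintype : Fintype carrier]

attribute [instance] FinPart.fintype

instance : CoeSort FinPart Type := ⟨FinPart.carrier⟩

instance : Category FinPart where
  Hom X Y := X → Option Y
  id X := fun x => some x
  comp f g := fun x => (f x).bind g
  id_comp f := rfl
  comp_id f := by
    funext x
    show (f x).bind (fun y => some y) = f x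
    cases f x <;> rfl
  assoc f g h := by
    funext x
    show ((f x).bind g).bind h = (f x).bind (fun y => (g y).bind h)
    cases f x <;> rfl

/-- The category `sur` of finite sets and surjective (everywhere-defined) maps; note that
the empty set is an isolated object. -/
structure FinSur where
  carrier : Type
  [fintype : Fintype carrier]

attribute [instance] FinSur.fintype

instance : CoeSort FinSur Type := ⟨FinSur.carrier⟩

instance : Category FinSur where
  Hom X Y := {f : X → Y // Function.Surjective f}
  id X := ⟨id, Function.surjective_id⟩
  comp f g := ⟨g.1 ∘ f.1, g.2.comp f.2⟩

namespace DP

attribute [local instance] Classical.propDecidable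

open Opposite Finset

variable {k : Type} [Field k]

/-- object of `part` on a finite type -/
abbrev pt (α : Type) [Fintype α] : FinPart := FinPart.mk α
/-- object of `sur` on a finite type -/
abbrev st (α : Type) [Fintype α] : FinSur := FinSur.mk α

@[simp] lemma part_comp_apply {X Y Z : FinPart} (f : X ⟶ Y) (g : Y ⟶ Z) (x : X) :
    (f ≫ g) x = (f x).bind g := rfl

@[simp] lemma part_id_apply {X : FinPart} (x : X) : (𝟙 X : X → Option X) x = some x := rfl

section PartMaps
variable {α : Type} [Fintype α]

def eP (C : Finset α) : pt α ⟶ pt α := fun a => if a ∈ C then some a else none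
def jP (U : Finset α) : pt ↥U ⟶ pt α := fun u => some ↑u
def rP (U : Finset α) : pt α ⟶ pt ↥U := fun a => if h : a ∈ U then some ⟨a, h⟩ else none

lemma eP_comp (C D : Finset α) : eP C ≫ eP D = eP (C ∩ D) := by
  funext a
  show (eP C a).bind (eP D) = _
  by_cases h : a ∈ C
  · by_cases h' : a ∈ D <;> simp [eP, h, h', mem_inter]
  · simp [eP, h, mem_inter]

@[simp] lemma eP_univ : eP (univ : Finset α) = 𝟙 (pt α) := by
  funext a; simp [eP]

lemma jP_rP (U : Finset α) : jP U ≫ rP U = 𝟙 (pt ↥U) := by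
  funext u
  show (some (↑u : α)).bind (rP U) = some u
  simp [rP, u.2]

lemma rP_eP_jP (U : Finset α) (B : Finset ↥U) :
    rP U ≫ eP B ≫ jP U = eP (B.image Subtype.val) := by
  funext a
  simp only [part_comp_apply]
  by_cases h : a ∈ U
  · by_cases h' : (⟨a, h⟩ : ↥U) ∈ B
    · have : a ∈ B.image Subtype.val := mem_image.2 ⟨⟨a, h⟩, h', rfl⟩
      simp [rP, eP, jP, h, h', this]
    · have : a ∉ B.image Subtype.val := by
        simp only [mem_image, not_exists]
        rintro ⟨x, hx⟩ ⟨hxB, hxa⟩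
        cases hxa
        exact h' hxB
      simp [rP, eP, h, h', this]
  · have : a ∉ B.image Subtype.val := by
      simp only [mem_image, not_exists]
      rintro ⟨x, hx⟩ ⟨_, hxa⟩
      exact h (hxa ▸ hx)
    simp [rP, eP, h, this]

end PartMaps

section Fside
variable (F : FinPartᵒᵖ ⥤ ModuleCat.{0} k)

lemma Fmap_comp {A B C : FinPart} (f : A ⟶ B) (g : B ⟶ C) (v : F.obj (op C)) :
    F.map (f ≫ g).op v = F.map f.op (F.map g.op v) := by
  rw [op_comp, F.map_comp]; rfl

end Fside


section Mobius
variable {α : Type}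

def flipx (x : α) (U : Finset α) : Finset α := if x ∈ U then U.erase x else insert x U

lemma flipx_flipx (x : α) (U : Finset α) : flipx x (flipx x U) = U := by
  by_cases h : x ∈ U
  · simp [flipx, h, Finset.insert_erase]
  · simp [flipx, h, Finset.erase_insert]

lemma flipx_ne (x : α) (U : Finset α) : flipx x U ≠ U := by
  by_cases h : x ∈ U
  · simp only [flipx, if_pos h]
    intro he
    exact (he ▸ Finset.notMem_erase x U) h
  · simp only [flipx, if_neg h]
    intro he
    exact h (he ▸ Finset.mem_insert_self x U)

lemma subset_flipx {V U : Finset α} {x : α} (hx : x ∉ V) : V ⊆ flipx x U ↔ V ⊆ U := by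
  by_cases h : x ∈ U
  · simp only [flipx, if_pos h]
    constructor
    · exact fun hs => hs.trans (Finset.erase_subset _ _)
    · exact fun hs => Finset.subset_erase.2 ⟨hs, hx⟩
  · simp only [flipx, if_neg h]
    constructor
    · intro hs a ha
      rcases Finset.mem_insert.1 (hs ha) with h1 | h1
      · exact absurd (h1 ▸ ha) hx
      · exact h1
    · exact fun hs => hs.trans (Finset.subset_insert _ _)

lemma inter_flipx {D U : Finset α} {x : α} (hx : x ∉ D) : flipx x U ∩ D = U ∩ D := by
  ext a
  simp only [Finset.mem_inter, flipx]
  by_cases h : x ∈ U <;> simp only [if_pos, if_neg, h]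
  · constructor
    · rintro ⟨h1, h2⟩; exact ⟨Finset.mem_of_mem_erase h1, h2⟩
    · rintro ⟨h1, h2⟩
      exact ⟨Finset.mem_erase.2 ⟨fun he => hx (he ▸ h2), h1⟩, h2⟩
  · constructor
    · rintro ⟨h1, h2⟩
      rcases Finset.mem_insert.1 h1 with h3 | h3
      · exact absurd (h3 ▸ h2) hx
      · exact ⟨h3, h2⟩
    · rintro ⟨h1, h2⟩; exact ⟨Finset.mem_insert_of_mem h1, h2⟩

variable [Fintype α]

def sgn (k : Type) [Field k] (U : Finset α) : k := (-1 : k) ^ (Fintype.card α - U.card)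

lemma sgn_flipx (x : α) (U : Finset α) : sgn k (flipx x U) = - sgn k U := by
  have hUuniv := Finset.card_le_univ U
  by_cases h : x ∈ U
  · have hc : (flipx x U).card + 1 = U.card := by
      simp only [flipx, if_pos h]
      exact Finset.card_erase_add_one h
    have he : Fintype.card α - (flipx x U).card
        = (Fintype.card α - U.card) + 1 := by omega
    rw [sgn, sgn, he, pow_succ]
    ring
  · have hc : U.card + 1 = (flipx x U).card := by
      simp only [flipx, if_neg h]
      exact (Finset.card_insert_of_notMem h).symm
    have hUuniv2 := Finset.card_le_univ (flipx x U)
    have he : Fintype.card α - U.card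
        = (Fintype.card α - (flipx x U).card) + 1 := by omega
    rw [sgn, sgn, he, pow_succ]
    ring

@[simp] lemma sgn_univ : sgn k (Finset.univ : Finset α) = 1 := by
  rw [sgn, Finset.card_univ, Nat.sub_self, pow_zero]

variable {M : Type} [AddCommGroup M]

lemma mobius_sum0 (x : α) (w : Finset α → M) (hflip : ∀ U, w (flipx x U) = - w U) :
    ∑ U : Finset α, w U = 0 := by
  refine Finset.sum_involution (fun U _ => flipx x U) (fun U _ => ?_)
    (fun U _ _ => flipx_ne x U) (fun U _ => Finset.mem_univ _) (fun U _ => flipx_flipx x U)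
  rw [hflip U]; abel

lemma mobius_sum1 (V : Finset α) (x : α) (hx : x ∉ V) (w : Finset α → M)
    (hflip : ∀ U, V ⊆ U → w (flipx x U) = - w U) :
    ∑ U : Finset α, (if V ⊆ U then w U else 0) = 0 := by
  refine mobius_sum0 x _ (fun U => ?_)
  by_cases h : V ⊆ U
  · rw [if_pos ((subset_flipx hx).2 h), if_pos h, hflip U h]
  · rw [if_neg (fun hc => h ((subset_flipx hx).1 hc)), if_neg h, neg_zero]

end Mobius

section Fside
variable (F : FinPartᵒᵖ ⥤ ModuleCat.{0} k) {α : Type} [Fintype α]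

def idemL (C : Finset α) : F.obj (op (pt α)) →ₗ[k] F.obj (op (pt α)) := (F.map (eP C).op).hom

lemma idem_idem (C D : Finset α) (v : F.obj (op (pt α))) :
    idemL F C (idemL F D v) = idemL F (C ∩ D) v := by
  show F.map (eP C).op (F.map (eP D).op v) = F.map (eP (C ∩ D)).op v
  rw [← eP_comp, op_comp, F.map_comp]
  rfl

@[simp] lemma idem_univ (v : F.obj (op (pt α))) : idemL F (Finset.univ : Finset α) v = v := by
  show F.map (eP Finset.univ).op v = v
  rw [eP_univ]
  show F.map (𝟙 (op (pt α))) v = v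
  rw [F.map_id]
  rfl

def epsL : F.obj (op (pt α)) →ₗ[k] F.obj (op (pt α)) :=
  ∑ C : Finset α, sgn k C • idemL F C

lemma epsL_apply (v : F.obj (op (pt α))) :
    epsL F v = ∑ C : Finset α, sgn k C • idemL F C v := by
  simp [epsL]

def crSub (α : Type) [Fintype α] : Submodule k (F.obj (op (pt α))) where
  carrier := {v | ∀ D : Finset α, D ≠ Finset.univ → idemL F D v = 0}
  add_mem' := by
    intro a b ha hb D hD
    rw [map_add, ha D hD, hb D hD, add_zero]
  zero_mem' := by intro D hD; simp
  smul_mem' := by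
    intro c a ha D hD
    rw [map_smul, ha D hD, smul_zero]

lemma idem_epsL {D : Finset α} (hD : D ≠ Finset.univ) (v : F.obj (op (pt α))) :
    idemL F D (epsL F v) = 0 := by
  obtain ⟨x, hx⟩ : ∃ x, x ∉ D := by
    by_contra hc
    push_neg at hc
    exact hD (Finset.eq_univ_iff_forall.2 hc)
  rw [epsL_apply, map_sum]
  refine mobius_sum0 x _ (fun C => ?_)
  rw [map_smul, map_smul, idem_idem, idem_idem, Finset.inter_comm D, inter_flipx hx,
    Finset.inter_comm, sgn_flipx, neg_smul]

lemma epsL_idem {D : Finset α} (hD : D ≠ Finset.univ) (v : F.obj (op (pt α))) :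
    epsL F (idemL F D v) = 0 := by
  obtain ⟨x, hx⟩ : ∃ x, x ∉ D := by
    by_contra hc
    push_neg at hc
    exact hD (Finset.eq_univ_iff_forall.2 hc)
  rw [epsL_apply]
  refine mobius_sum0 x _ (fun C => ?_)
  rw [idem_idem, idem_idem, sgn_flipx, neg_smul, inter_flipx hx]

lemma epsL_mem (v : F.obj (op (pt α))) : epsL F v ∈ crSub F α :=
  fun D hD => idem_epsL F hD v

lemma epsL_fix {v : F.obj (op (pt α))} (hv : v ∈ crSub F α) : epsL F v = v := by
  rw [epsL_apply]
  rw [Finset.sum_eq_single Finset.univ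
    (fun C _ hC => by rw [hv C hC, smul_zero]) (fun h => absurd (Finset.mem_univ _) h)]
  simp

end Fside

section SurSide
variable (F : FinPartᵒᵖ ⥤ ModuleCat.{0} k)

/-- a surjection as a (total) partial map -/
def tP {A B : FinSur} (s : A ⟶ B) : pt A.carrier ⟶ pt B.carrier := fun a => some (s.1 a)

lemma tP_id (A : FinSur) : tP (𝟙 A) = 𝟙 (pt A.carrier) := rfl

lemma tP_comp {A B C : FinSur} (s : A ⟶ B) (t : B ⟶ C) : tP (s ≫ t) = tP s ≫ tP t := rfl

lemma tP_eP {A B : FinSur} (s : A ⟶ B) (C : Finset B.carrier) :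
    tP s ≫ eP C = eP (Finset.univ.filter (fun a => s.1 a ∈ C)) ≫ tP s := by
  funext a
  simp only [part_comp_apply, tP, eP, Option.bind_some]
  by_cases h : s.1 a ∈ C
  · simp [h, Finset.mem_filter, tP]
  · simp [h, Finset.mem_filter]

lemma preim_ne_univ {A B : FinSur} (s : A ⟶ B) {C : Finset B.carrier} (hC : C ≠ Finset.univ) :
    (Finset.univ.filter (fun a => s.1 a ∈ C)) ≠ Finset.univ := by
  obtain ⟨y, hy⟩ : ∃ y, y ∉ C := by
    by_contra hc
    push_neg at hc
    exact hC (Finset.eq_univ_iff_forall.2 hc)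
  obtain ⟨a, rfl⟩ := s.2 y
  intro hc
  exact hy (Finset.mem_filter.1 (hc ▸ Finset.mem_univ a : a ∈ _)).2

lemma eps_tP_idem {A B : FinSur} (s : A ⟶ B) {C : Finset B.carrier} (hC : C ≠ Finset.univ)
    (v : F.obj (op (pt B.carrier))) :
    epsL F (F.map (tP s).op (idemL F C v)) = 0 := by
  have h1 : F.map (tP s).op (idemL F C v)
      = idemL F (Finset.univ.filter (fun a => s.1 a ∈ C)) (F.map (tP s).op v) := by
    show F.map (tP s).op (F.map (eP C).op v)
      = F.map (eP (Finset.univ.filter (fun a => s.1 a ∈ C))).op (F.map (tP s).op v)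
    rw [← Fmap_comp, ← Fmap_comp, tP_eP]
  rw [h1, epsL_idem F (preim_ne_univ s hC)]

lemma eps_tP_eps {A B : FinSur} (s : A ⟶ B) (v : F.obj (op (pt B.carrier))) :
    epsL F (F.map (tP s).op (epsL F v)) = epsL F (F.map (tP s).op v) := by
  rw [epsL_apply F v, map_sum, map_sum]
  rw [Finset.sum_eq_single Finset.univ (fun C _ hC => by
      rw [map_smul, map_smul, eps_tP_idem F s hC, smul_zero])
    (fun h => absurd (Finset.mem_univ _) h)]
  simp

def PsiMapL {A B : FinSur} (s : A ⟶ B) :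
    ↥(crSub F B.carrier) →ₗ[k] ↥(crSub F A.carrier) :=
  LinearMap.codRestrict _
    ((epsL F).comp ((F.map (tP s).op).hom.comp
      (crSub F B.carrier).subtype))
    (fun w => epsL_mem F _)

lemma PsiMapL_apply {A B : FinSur} (s : A ⟶ B) (w : ↥(crSub F B.carrier)) :
    (PsiMapL F s w : F.obj (op (pt A.carrier))) = epsL F (F.map (tP s).op w.1) := rfl

def Psi : FinSurᵒᵖ ⥤ ModuleCat.{0} k where
  obj X := ModuleCat.of k ↥(crSub F X.unop.carrier)
  map {X Y} f := ModuleCat.ofHom (PsiMapL F f.unop)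
  map_id X := by
    apply ModuleCat.hom_ext; apply LinearMap.ext
    intro w
    apply Subtype.ext
    show epsL F (F.map (tP (𝟙 X.unop)).op w.1) = w.1
    rw [tP_id]
    show epsL F (F.map (𝟙 (op (pt X.unop.carrier))) w.1) = w.1
    rw [F.map_id]
    exact epsL_fix F w.2
  map_comp {X Y Z} f g := by
    apply ModuleCat.hom_ext; apply LinearMap.ext
    intro w
    apply Subtype.ext
    show epsL F (F.map (tP (g.unop ≫ f.unop)).op w.1)
      = (PsiMapL F g.unop (PsiMapL F f.unop w)).1
    rw [PsiMapL_apply, PsiMapL_apply, eps_tP_eps, tP_comp, Fmap_comp]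

end SurSide

section MapsSec
variable {α β γ : Type} [Fintype α] [Fintype β] [Fintype γ]

/-- `f` restricted to `U` is everywhere defined with image exactly `V` -/
def Maps (f : α → Option β) (U : Finset α) (V : Finset β) : Prop :=
  (∀ x ∈ U, ∃ y ∈ V, f x = some y) ∧ (∀ y ∈ V, ∃ x ∈ U, f x = some y)

lemma Maps.unique {f : α → Option β} {U : Finset α} {V V' : Finset β}
    (h : Maps f U V) (h' : Maps f U V') : V = V' := by
  ext y
  constructor
  · intro hy
    obtain ⟨x, hxU, hfx⟩ := h.2 y hy
    obtain ⟨y', hy', hfx'⟩ := h'.1 x hxU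
    rw [hfx] at hfx'
    exact (Option.some_inj.1 hfx') ▸ hy'
  · intro hy
    obtain ⟨x, hxU, hfx⟩ := h'.2 y hy
    obtain ⟨y', hy', hfx'⟩ := h.1 x hxU
    rw [hfx] at hfx'
    exact (Option.some_inj.1 hfx') ▸ hy'

def msur {f : α → Option β} {U : Finset α} {V : Finset β} (h : Maps f U V) :
    st ↥U ⟶ st ↥V :=
  ⟨fun u => ⟨(f u.1).get (by obtain ⟨y, _, hy⟩ := h.1 u.1 u.2; rw [hy]; rfl),
      by obtain ⟨y, hyV, hy⟩ := h.1 u.1 u.2; simpa [hy] using hyV⟩,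
   by rintro ⟨y, hy⟩
      obtain ⟨x, hxU, hfx⟩ := h.2 y hy
      exact ⟨⟨x, hxU⟩, Subtype.ext (by simp [hfx])⟩⟩

lemma msur_spec {f : α → Option β} {U : Finset α} {V : Finset β} (h : Maps f U V) (u : ↥U) :
    f u.1 = some ((msur h).1 u).1 :=
  (Option.some_get _).symm

lemma maps_id (U : Finset α) : Maps (fun x => some x) U U :=
  ⟨fun x hx => ⟨x, hx, rfl⟩, fun y hy => ⟨y, hy, rfl⟩⟩

lemma msur_id (U : Finset α) : msur (maps_id U) = 𝟙 (st ↥U) := by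
  apply Subtype.ext
  funext u
  apply Subtype.ext
  rfl

lemma maps_bind {f : α → Option β} {g : β → Option γ} {U : Finset α} {V : Finset β}
    {W : Finset γ} (h1 : Maps f U V) (h2 : Maps g V W) :
    Maps (fun x => (f x).bind g) U W := by
  constructor
  · intro x hx
    obtain ⟨y, hyV, hfy⟩ := h1.1 x hx
    obtain ⟨z, hzW, hgz⟩ := h2.1 y hyV
    exact ⟨z, hzW, by show (f x).bind g = some z; rw [hfy]; simpa⟩
  · intro z hz
    obtain ⟨y, hyV, hgy⟩ := h2.2 z hz
    obtain ⟨x, hxU, hfx⟩ := h1.2 y hyV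
    exact ⟨x, hxU, by show (f x).bind g = some z; rw [hfx]; simpa [hgy]⟩

lemma msur_bind {f : α → Option β} {g : β → Option γ} {U : Finset α} {V : Finset β}
    {W : Finset γ} (h1 : Maps f U V) (h2 : Maps g V W) :
    msur (maps_bind h1 h2) = msur h1 ≫ msur h2 := by
  apply Subtype.ext
  funext u
  apply Subtype.ext
  have e1 := msur_spec h1 u
  have e2 := msur_spec h2 ((msur h1).1 u)
  have e3 := msur_spec (maps_bind h1 h2) u
  apply Option.some_inj.1
  rw [← e3]
  show (f u.1).bind g = _
  rw [e1, Option.bind_some, e2]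
  rfl

/-- canonical intermediate set for a composite -/
def midSet (f : α → Option β) (U : Finset α) : Finset β :=
  Finset.univ.filter (fun y => ∃ x ∈ U, f x = some y)

lemma maps_mid_left {f : α → Option β} {g : β → Option γ} {U : Finset α} {W : Finset γ}
    (h : Maps (fun x => (f x).bind g) U W) : Maps f U (midSet f U) := by
  constructor
  · intro x hx
    obtain ⟨z, _, hz⟩ := h.1 x hx
    have hz' : (f x).bind g = some z := hz
    cases hfx : f x with
    | none => rw [hfx] at hz'; simp at hz'
    | some y =>
      exact ⟨y, Finset.mem_filter.2 ⟨Finset.mem_univ _, ⟨x, hx, hfx⟩⟩, rfl⟩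
  · intro y hy
    exact (Finset.mem_filter.1 hy).2

lemma maps_mid_right {f : α → Option β} {g : β → Option γ} {U : Finset α} {W : Finset γ}
    (h : Maps (fun x => (f x).bind g) U W) : Maps g (midSet f U) W := by
  constructor
  · intro y hy
    obtain ⟨x, hxU, hfx⟩ := (Finset.mem_filter.1 hy).2
    obtain ⟨z, hzW, hz⟩ := h.1 x hxU
    have hz' : (f x).bind g = some z := hz
    rw [hfx, Option.bind_some] at hz'
    exact ⟨z, hzW, hz'⟩
  · intro z hz
    obtain ⟨x, hxU, hfx⟩ := h.2 z hz
    have hfx' : (f x).bind g = some z := hfx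
    cases hfy : f x with
    | none => rw [hfy] at hfx'; simp at hfx'
    | some y =>
      rw [hfy, Option.bind_some] at hfx'
      exact ⟨y, Finset.mem_filter.2 ⟨Finset.mem_univ _, ⟨x, hxU, hfy⟩⟩, hfx'⟩

end MapsSec

section PhiSec
variable (G : FinSurᵒᵖ ⥤ ModuleCat.{0} k)

lemma Gmap_comp {A B C : FinSur} (f : A ⟶ B) (g : B ⟶ C) (v : G.obj (op C)) :
    G.map (f ≫ g).op v = G.map f.op (G.map g.op v) := by
  rw [op_comp, G.map_comp]; rfl

def PhiO (α : Type) [Fintype α] : ModuleCat.{0} k :=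
  ModuleCat.of k (∀ U : Finset α, G.obj (op (st ↥U)))

def PhiMapL {α β : Type} [Fintype α] [Fintype β] (f : pt α ⟶ pt β) :
    PhiO G β ⟶ PhiO G α := ModuleCat.ofHom
  { toFun := fun φ U => ∑ V : Finset β, if h : Maps f U V then G.map (msur h).op (φ V) else 0
    map_add' := fun φ ψ => by
      funext U
      show _ = (∑ V : Finset β, (_ : G.obj (op (st ↥U)))) + (∑ V : Finset β, (_ : G.obj (op (st ↥U))))
      rw [← Finset.sum_add_distrib]
      refine Finset.sum_congr rfl (fun V _ => ?_)
      by_cases h : Maps f U V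
      · rw [dif_pos h, dif_pos h, dif_pos h]
        show G.map (msur h).op (φ V + ψ V) = _
        rw [map_add]
      · rw [dif_neg h, dif_neg h, dif_neg h, add_zero]
    map_smul' := fun c φ => by
      funext U
      show _ = c • ∑ V : Finset β, (_ : G.obj (op (st ↥U)))
      rw [Finset.smul_sum]
      refine Finset.sum_congr rfl (fun V _ => ?_)
      by_cases h : Maps f U V
      · rw [dif_pos h, dif_pos h]
        show G.map (msur h).op (c • φ V) = _
        rw [map_smul]
      · rw [dif_neg h, dif_neg h, smul_zero] }

lemma PhiMapL_apply {α β : Type} [Fintype α] [Fintype β] (f : pt α ⟶ pt β)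
    (φ : PhiO G β) (U : Finset α) :
    PhiMapL G f φ U = ∑ V : Finset β, if h : Maps f U V then G.map (msur h).op (φ V) else 0 :=
  rfl

lemma part_id_eq {α : Type} [Fintype α] : (𝟙 (pt α) : α → Option α) = fun x => some x := rfl

lemma part_comp_eq {X Y Z : FinPart} (f : X ⟶ Y) (g : Y ⟶ Z) :
    (f ≫ g) = fun x => (f x).bind g := rfl

lemma PhiMapL_id {α : Type} [Fintype α] (φ : PhiO G α) (U : Finset α) :
    PhiMapL G (𝟙 (pt α)) φ U = φ U := by
  rw [PhiMapL_apply]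
  simp only [part_id_eq]
  rw [Finset.sum_eq_single U (fun V _ hV => by
      rw [dif_neg (fun h : Maps _ U V => hV ((maps_id U).unique h).symm)])
    (fun h => absurd (Finset.mem_univ _) h)]
  rw [dif_pos (maps_id U), msur_id, op_id, G.map_id]
  rfl

lemma PhiMapL_comp {α β γ : Type} [Fintype α] [Fintype β] [Fintype γ]
    (f : pt α ⟶ pt β) (g : pt β ⟶ pt γ) (φ : PhiO G γ) (U : Finset α) :
    PhiMapL G (f ≫ g) φ U = PhiMapL G f (PhiMapL G g φ) U := by
  rw [PhiMapL_apply, PhiMapL_apply]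
  simp only [part_comp_eq]
  have rhs : ∀ V : Finset β,
      (if h : Maps f U V then G.map (msur h).op (PhiMapL G g φ V) else 0)
        = ∑ W : Finset γ, (if h : Maps f U V then
            (if h2 : Maps g V W then G.map (msur h).op (G.map (msur h2).op (φ W)) else 0)
          else 0) := by
    intro V
    by_cases h : Maps f U V
    · rw [dif_pos h, PhiMapL_apply, map_sum]
      refine Finset.sum_congr rfl (fun W _ => ?_)
      rw [dif_pos h]
      by_cases h2 : Maps g V W
      · rw [dif_pos h2, dif_pos h2]
      · rw [dif_neg h2, dif_neg h2, map_zero]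
    · rw [dif_neg h, eq_comm, Finset.sum_eq_zero (fun W _ => dif_neg h)]
  rw [Finset.sum_congr rfl (fun V _ => rhs V), Finset.sum_comm]
  refine Finset.sum_congr rfl (fun W _ => ?_)
  by_cases hc : Maps (fun x => (f x).bind g) U W
  · have h1 : Maps f U (midSet f U) := maps_mid_left hc
    have h2 : Maps g (midSet f U) W := maps_mid_right hc
    rw [dif_pos hc]
    rw [Finset.sum_eq_single (midSet f U) (fun V _ hV => ?_) (fun h => absurd (Finset.mem_univ _) h)]
    · rw [dif_pos h1, dif_pos h2]
      have : msur hc = msur h1 ≫ msur h2 := msur_bind h1 h2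
      rw [this, Gmap_comp]
    · by_cases hV1 : Maps f U V
      · rw [dif_pos hV1]
        by_cases hV2 : Maps g V W
        · exact absurd (hV1.unique h1) hV
        · rw [dif_neg hV2]
      · rw [dif_neg hV1]
  · rw [dif_neg hc, eq_comm]
    refine Finset.sum_eq_zero (fun V _ => ?_)
    by_cases hV1 : Maps f U V
    · rw [dif_pos hV1]
      by_cases hV2 : Maps g V W
      · exact absurd (maps_bind hV1 hV2) hc
      · rw [dif_neg hV2]
    · rw [dif_neg hV1]

def PhiF : FinPartᵒᵖ ⥤ ModuleCat.{0} k where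
  obj X := PhiO G X.unop.carrier
  map {X Y} f := PhiMapL G f.unop
  map_id X := by
    apply ModuleCat.hom_ext; apply LinearMap.ext
    intro φ
    funext U
    exact PhiMapL_id G φ U
  map_comp {X Y Z} f g := by
    apply ModuleCat.hom_ext; apply LinearMap.ext
    intro φ
    funext U
    exact PhiMapL_comp G g.unop f.unop φ U

end PhiSec

section FunctorsSec

lemma nat_app {C : Type 1} [Category.{0} C] {F F' : C ⥤ ModuleCat.{0} k} (η : F ⟶ F')
    {A B : C} (f : A ⟶ B) (v : F.obj A) :
    η.app B (F.map f v) = F'.map f (η.app A v) := by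
  change (F.map f ≫ η.app B) v = (η.app A ≫ F'.map f) v
  rw [η.naturality f]

variable {G G' : FinSurᵒᵖ ⥤ ModuleCat.{0} k} (η : G ⟶ G')

def PhiT : PhiF G ⟶ PhiF G' where
  app X := ModuleCat.ofHom
    { toFun := fun φ U => η.app (op (st ↥U)) (φ U)
      map_add' := fun φ ψ => by
        funext U
        show η.app _ (φ U + ψ U) = _
        rw [map_add]
        rfl
      map_smul' := fun c φ => by
        funext U
        show η.app _ (c • φ U) = _
        rw [map_smul]
        rfl }
  naturality {X Y} f := by
    apply ModuleCat.hom_ext; apply LinearMap.ext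
    intro φ
    funext U
    show η.app _ (PhiMapL G f.unop φ U) = PhiMapL G' f.unop _ U
    erw [PhiMapL_apply, PhiMapL_apply, map_sum]
    refine Finset.sum_congr rfl (fun V _ => ?_)
    by_cases h : Maps f.unop U V
    · rw [dif_pos h, dif_pos h]
      exact nat_app η (msur h).op (φ V)
    · rw [dif_neg h, dif_neg h, map_zero]

def Phi : (FinSurᵒᵖ ⥤ ModuleCat.{0} k) ⥤ (FinPartᵒᵖ ⥤ ModuleCat.{0} k) where
  obj := PhiF
  map := PhiT
  map_id G := by
    apply NatTrans.ext
    funext X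
    apply ModuleCat.hom_ext; apply LinearMap.ext
    intro φ
    rfl
  map_comp η θ := by
    apply NatTrans.ext
    funext X
    apply ModuleCat.hom_ext; apply LinearMap.ext
    intro φ
    rfl

variable {F F' : FinPartᵒᵖ ⥤ ModuleCat.{0} k} (ζ : F ⟶ F')

lemma eta_idem {α : Type} [Fintype α] (C : Finset α) (v : F.obj (op (pt α))) :
    ζ.app (op (pt α)) (idemL F C v) = idemL F' C (ζ.app (op (pt α)) v) :=
  nat_app ζ (eP C).op v

lemma eta_eps {α : Type} [Fintype α] (v : F.obj (op (pt α))) :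
    ζ.app (op (pt α)) (epsL F v) = epsL F' (ζ.app (op (pt α)) v) := by
  rw [epsL_apply, epsL_apply, map_sum]
  refine Finset.sum_congr rfl (fun C _ => ?_)
  rw [map_smul, eta_idem]

lemma eta_mem {α : Type} [Fintype α] {v : F.obj (op (pt α))} (hv : v ∈ crSub F α) :
    ζ.app (op (pt α)) v ∈ crSub F' α := by
  intro D hD
  rw [← eta_idem, hv D hD, map_zero]

def PsiT : Psi F ⟶ Psi F' where
  app X := ModuleCat.ofHom
    { toFun := fun w => ⟨ζ.app (op (pt X.unop.carrier)) w.1, eta_mem ζ w.2⟩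
      map_add' := fun w w' => by
        apply Subtype.ext
        show ζ.app _ (w.1 + w'.1) = _
        rw [map_add]
        rfl
      map_smul' := fun c w => by
        apply Subtype.ext
        show ζ.app _ (c • w.1) = _
        rw [map_smul]
        rfl }
  naturality {X Y} f := by
    apply ModuleCat.hom_ext; apply LinearMap.ext
    intro w
    apply Subtype.ext
    show ζ.app _ ((PsiMapL F f.unop w : F.obj (op (pt Y.unop.carrier))))
      = (PsiMapL F' f.unop ⟨ζ.app _ w.1, _⟩ : F'.obj (op (pt Y.unop.carrier)))
    erw [PsiMapL_apply, PsiMapL_apply, eta_eps]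
    congr 1
    exact nat_app ζ (tP f.unop).op w.1

def PsiFun : (FinPartᵒᵖ ⥤ ModuleCat.{0} k) ⥤ (FinSurᵒᵖ ⥤ ModuleCat.{0} k) where
  obj := Psi
  map := PsiT
  map_id F := by
    apply NatTrans.ext
    funext X
    apply ModuleCat.hom_ext; apply LinearMap.ext
    intro w
    rfl
  map_comp η θ := by
    apply NatTrans.ext
    funext X
    apply ModuleCat.hom_ext; apply LinearMap.ext
    intro w
    rfl

end FunctorsSec

section CounitSec
variable (G : FinSurᵒᵖ ⥤ ModuleCat.{0} k)

lemma maps_eP_self {α : Type} [Fintype α] {U D : Finset α} (h : U ⊆ D) : Maps (eP D) U U :=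
  ⟨fun x hx => ⟨x, hx, by simp [eP, h hx]⟩, fun y hy => ⟨y, hy, by simp [eP, h hy]⟩⟩

lemma maps_eP_sub {α : Type} [Fintype α] {U D V : Finset α} (h : Maps (eP D) U V) :
    U ⊆ D ∧ V = U := by
  have hUD : U ⊆ D := by
    intro x hx
    obtain ⟨y, _, hy⟩ := h.1 x hx
    by_contra hc
    simp [eP, hc] at hy
  exact ⟨hUD, h.unique (maps_eP_self hUD)⟩

lemma msur_eP {α : Type} [Fintype α] {U D : Finset α} (h : U ⊆ D) :
    msur (maps_eP_self h) = 𝟙 (st ↥U) := by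
  apply Subtype.ext
  funext u
  apply Subtype.ext
  apply Option.some_inj.1
  rw [← msur_spec (maps_eP_self h) u]
  show eP D u.1 = some u.1
  simp [eP, h u.2]

lemma idem_PhiF {α : Type} [Fintype α] (D : Finset α) (φ : PhiO G α) (U : Finset α) :
    idemL (PhiF G) D φ U = if U ⊆ D then φ U else 0 := by
  show PhiMapL G (eP D) φ U = _
  rw [PhiMapL_apply]
  by_cases h : U ⊆ D
  · rw [if_pos h]
    rw [Finset.sum_eq_single U (fun V _ hV => dif_neg (fun hM => hV (maps_eP_sub hM).2))
      (fun hn => absurd (Finset.mem_univ _) hn)]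
    rw [dif_pos (maps_eP_self h), msur_eP h, op_id, G.map_id]
    rfl
  · rw [if_neg h]
    exact Finset.sum_eq_zero (fun V _ => dif_neg (fun hM => h (maps_eP_sub hM).1))

lemma crSub_PhiF_iff {α : Type} [Fintype α] (φ : PhiO G α) :
    φ ∈ crSub (PhiF G) α ↔ ∀ U : Finset α, U ≠ Finset.univ → φ U = 0 := by
  constructor
  · intro hφ U hU
    have h0 := congrFun (hφ U hU) U
    rw [idem_PhiF, if_pos (subset_refl U)] at h0
    exact h0
  · intro h D hD
    funext U
    rw [idem_PhiF]
    by_cases hU : U ⊆ D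
    · rw [if_pos hU, h U (fun he => hD (Finset.univ_subset_iff.1 (he ▸ hU)))]
      rfl
    · rw [if_neg hU]
      rfl

lemma eps_PhiF_univ {α : Type} [Fintype α] (φ : PhiO G α) :
    epsL (PhiF G) φ Finset.univ = φ Finset.univ := by
  erw [congrFun (epsL_apply (PhiF G) φ) Finset.univ, Finset.sum_apply,
    Finset.sum_eq_single Finset.univ
      (fun C _ hC => by
        erw [Pi.smul_apply, idem_PhiF, if_neg (fun hc => hC (Finset.univ_subset_iff.1 hc)),
          smul_zero])
      (fun hn => absurd (Finset.mem_univ _) hn),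
    Pi.smul_apply, idem_PhiF, if_pos (subset_refl _), sgn_univ, one_smul]

def mkS (A : FinSur) : A ⟶ st ↥(Finset.univ : Finset A.carrier) :=
  ⟨fun a => ⟨a, Finset.mem_univ a⟩, fun u => ⟨u.1, Subtype.ext rfl⟩⟩

def selS {A : FinSur} {U : Finset A.carrier} (h : U = Finset.univ) : st ↥U ⟶ A :=
  ⟨fun u => u.1, fun a => ⟨⟨a, by rw [h]; exact Finset.mem_univ a⟩, rfl⟩⟩

lemma mkS_selS (A : FinSur) : mkS A ≫ selS (rfl : (Finset.univ : Finset A.carrier) = _) = 𝟙 A :=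
  Subtype.ext rfl

lemma selS_mkS (A : FinSur) :
    selS (rfl : (Finset.univ : Finset A.carrier) = _) ≫ mkS A = 𝟙 (st ↥(Finset.univ : Finset A.carrier)) := by
  apply Subtype.ext
  funext u
  apply Subtype.ext
  rfl

lemma maps_tP {A B : FinSur} (s : A ⟶ B) :
    Maps (tP s) (Finset.univ : Finset A.carrier) (Finset.univ : Finset B.carrier) :=
  ⟨fun x _ => ⟨s.1 x, Finset.mem_univ _, rfl⟩,
   fun y _ => by obtain ⟨x, rfl⟩ := s.2 y; exact ⟨x, Finset.mem_univ _, rfl⟩⟩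

lemma mkS_msur {A B : FinSur} (s : A ⟶ B) :
    mkS A ≫ msur (maps_tP s) = s ≫ mkS B := by
  apply Subtype.ext
  funext a
  apply Subtype.ext
  show ((msur (maps_tP s)).1 ⟨a, Finset.mem_univ a⟩).1 = s.1 a
  exact (Option.some_inj.1 (msur_spec (maps_tP s) ⟨a, Finset.mem_univ a⟩)).symm

end CounitSec

section CounitIso
variable (G : FinSurᵒᵖ ⥤ ModuleCat.{0} k)

def cHom (X : FinSurᵒᵖ) : (Psi (PhiF G)).obj X ⟶ G.obj X := ModuleCat.ofHom
  { toFun := fun w => G.map (mkS X.unop).op (w.1 Finset.univ)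
    map_add' := fun w w' => by
      show G.map (mkS X.unop).op (w.1 Finset.univ + w'.1 Finset.univ) = _
      rw [map_add]
    map_smul' := fun c w => by
      show G.map (mkS X.unop).op (c • w.1 Finset.univ) = _
      rw [map_smul]
      rfl }

def cInv (X : FinSurᵒᵖ) : G.obj X ⟶ (Psi (PhiF G)).obj X := ModuleCat.ofHom
  { toFun := fun v => ⟨fun U => if h : U = Finset.univ then G.map (selS h).op v else 0,
      (crSub_PhiF_iff G _).2 (fun U hU => dif_neg hU)⟩
    map_add' := fun v v' => by
      apply Subtype.ext
      funext U
      show (if h : U = Finset.univ then G.map (selS h).op (v + v') else 0)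
        = (if h : U = Finset.univ then G.map (selS h).op v else 0)
          + (if h : U = Finset.univ then G.map (selS h).op v' else 0)
      by_cases h : U = Finset.univ <;> simp [h, map_add]
    map_smul' := fun c v => by
      apply Subtype.ext
      funext U
      show (if h : U = Finset.univ then G.map (selS h).op (c • v) else 0)
        = c • (if h : U = Finset.univ then G.map (selS h).op v else 0)
      by_cases h : U = Finset.univ <;> simp [h, map_smul] }

lemma cHom_cInv (X : FinSurᵒᵖ) (w : (Psi (PhiF G)).obj X) :
    cInv G X (cHom G X w) = w := by
  apply Subtype.ext
  funext U
  show (if h : U = Finset.univ then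
      G.map (selS h).op (G.map (mkS X.unop).op (w.1 Finset.univ)) else 0) = w.1 U
  by_cases h : U = Finset.univ
  · subst h
    rw [dif_pos rfl, ← Gmap_comp, selS_mkS]
    show G.map (𝟙 (op (st ↥(Finset.univ : Finset X.unop.carrier)))) _ = _
    rw [G.map_id]
    rfl
  · rw [dif_neg h, ((crSub_PhiF_iff G _).1 w.2 U h)]

lemma cInv_cHom (X : FinSurᵒᵖ) (v : G.obj X) :
    cHom G X (cInv G X v) = v := by
  show G.map (mkS X.unop).op ((if h : (Finset.univ : Finset X.unop.carrier) = Finset.univ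
      then G.map (selS h).op v else 0)) = v
  rw [dif_pos rfl, ← Gmap_comp, mkS_selS]
  show G.map (𝟙 (op X.unop)) v = v
  rw [G.map_id]
  rfl

lemma cHom_natural {X Y : FinSurᵒᵖ} (f : X ⟶ Y) (w : (Psi (PhiF G)).obj X) :
    cHom G Y (PsiMapL (PhiF G) f.unop w) = G.map f (cHom G X w) := by
  show G.map (mkS Y.unop).op ((PsiMapL (PhiF G) f.unop w).1 Finset.univ) = _
  have h1 : (PsiMapL (PhiF G) f.unop w).1 Finset.univ
      = ((PhiF G).map (tP f.unop).op w.1) Finset.univ := by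
    rw [congrFun (PsiMapL_apply (PhiF G) f.unop w) Finset.univ]
    exact eps_PhiF_univ G _
  have h2 : ((PhiF G).map (tP f.unop).op w.1) Finset.univ
      = G.map (msur (maps_tP f.unop)).op (w.1 Finset.univ) := by
    show PhiMapL G (tP f.unop) w.1 Finset.univ = _
    erw [PhiMapL_apply,
      Finset.sum_eq_single Finset.univ
        (fun V _ hV => dif_neg (fun hM => hV (hM.unique (maps_tP f.unop))))
        (fun hn => absurd (Finset.mem_univ _) hn),
      dif_pos (maps_tP f.unop)]
  rw [h1, h2, ← Gmap_comp, mkS_msur, Gmap_comp]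
  rfl

def counitIso : Phi ⋙ (PsiFun : (FinPartᵒᵖ ⥤ ModuleCat.{0} k) ⥤ _) ≅ 𝟭 _ :=
  NatIso.ofComponents
    (fun G => NatIso.ofComponents
      (fun X => ⟨cHom G X, cInv G X,
        by apply ModuleCat.hom_ext; apply LinearMap.ext; intro w; exact cHom_cInv G X w,
        by apply ModuleCat.hom_ext; apply LinearMap.ext; intro v; exact cInv_cHom G X v⟩)
      (fun {X Y} f => by
        apply ModuleCat.hom_ext; apply LinearMap.ext
        intro w
        exact cHom_natural G f w))
    (fun {G G'} η => by
      apply NatTrans.ext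
      funext X
      apply ModuleCat.hom_ext; apply LinearMap.ext
      intro w
      exact (nat_app η (mkS X.unop).op (w.1 Finset.univ)).symm)

end CounitIso

section UnitSec

lemma pow_sub_succ {k : Type} [Field k] (a b : ℕ) (h : b ≤ a) :
    ((-1 : k)) ^ (a + 1 - b) = -((-1 : k) ^ (a - b)) := by
  rw [Nat.succ_sub h, pow_succ]
  ring

lemma filter_image {α : Type} [Fintype α] {U V : Finset α} (hVU : V ⊆ U) :
    ((Finset.univ.filter (fun u : ↥U => ↑u ∈ V)).image Subtype.val) = V := by
  ext a
  constructor
  · intro ha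
    obtain ⟨u, hu, rfl⟩ := Finset.mem_image.1 ha
    exact (Finset.mem_filter.1 hu).2
  · intro ha
    exact Finset.mem_image.2 ⟨⟨a, hVU ha⟩, Finset.mem_filter.2 ⟨Finset.mem_univ _, ha⟩, rfl⟩

lemma image_filter {α : Type} [Fintype α] {U : Finset α} (B : Finset ↥U) :
    Finset.univ.filter (fun u : ↥U => ↑u ∈ B.image Subtype.val) = B := by
  ext u
  rw [Finset.mem_filter]
  constructor
  · rintro ⟨-, hu⟩
    obtain ⟨w, hw, hwu⟩ := Finset.mem_image.1 hu
    exact (Subtype.ext hwu : w = u) ▸ hw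
  · intro hu
    exact ⟨Finset.mem_univ _, Finset.mem_image.2 ⟨u, hu, rfl⟩⟩

/-- reindexing a sum over subsets of a subtype -/
lemma sum_subsets {α : Type} [Fintype α] {M : Type} [AddCommMonoid M]
    (U : Finset α) (g : Finset α → M) :
    ∑ B : Finset ↥U, g (B.image Subtype.val)
      = ∑ V : Finset α, if V ⊆ U then g V else 0 := by
  rw [eq_comm, ← Finset.sum_filter]
  refine Finset.sum_bij' (fun V _ => Finset.univ.filter (fun u : ↥U => ↑u ∈ V))
    (fun B _ => B.image Subtype.val)
    (fun V _ => Finset.mem_univ _)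
    (fun B _ => Finset.mem_filter.2 ⟨Finset.mem_univ _, fun a ha => by
      obtain ⟨u, _, rfl⟩ := Finset.mem_image.1 ha
      exact u.2⟩)
    (fun V hV => filter_image ((Finset.mem_filter.1 hV).2))
    (fun B _ => image_filter B)
    (fun V hV => (congrArg g (filter_image ((Finset.mem_filter.1 hV).2))).symm)

variable (F : FinPartᵒᵖ ⥤ ModuleCat.{0} k)

lemma card_image_val {α : Type} [Fintype α] {U : Finset α} (B : Finset ↥U) :
    (B.image Subtype.val).card = B.card := by
  convert Finset.card_image_of_injective B Subtype.val_injective using 2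

lemma sgn_card {α : Type} [Fintype α] {U : Finset α} (B : Finset ↥U) :
    sgn k B = ((-1 : k)) ^ (U.card - (B.image Subtype.val).card) := by
  rw [sgn, Fintype.card_coe, card_image_val]

lemma proj_term {α : Type} [Fintype α] (U : Finset α) (v : F.obj (op (pt α))) :
    F.map (rP U).op (epsL F (F.map (jP U).op v))
      = ∑ V : Finset α, if V ⊆ U then ((-1 : k)) ^ (U.card - V.card) • idemL F V v else 0 := by
  rw [epsL_apply, map_sum, ← sum_subsets U (fun V => ((-1 : k)) ^ (U.card - V.card) • idemL F V v)]
  refine Finset.sum_congr rfl (fun B _ => ?_)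
  rw [map_smul, sgn_card]
  congr 1
  show F.map (rP U).op (F.map (eP B).op (F.map (jP U).op v)) = _
  rw [← Fmap_comp, ← Fmap_comp, Category.assoc, rP_eP_jP]
  rfl

lemma bHom_aHom {α : Type} [Fintype α] (v : F.obj (op (pt α))) :
    ∑ U : Finset α, F.map (rP U).op (epsL F (F.map (jP U).op v)) = v := by
  rw [Finset.sum_congr rfl (fun U _ => proj_term F U v), Finset.sum_comm]
  rw [Finset.sum_eq_single Finset.univ
    (fun V _ hV => ?_) (fun hn => absurd (Finset.mem_univ _) hn)]
  · rw [Finset.sum_eq_single Finset.univ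
      (fun U _ hU => by rw [if_neg (fun hc => hU (Finset.univ_subset_iff.1 hc))])
      (fun hn => absurd (Finset.mem_univ _) hn),
      if_pos (subset_refl _), Nat.sub_self, pow_zero, one_smul, idem_univ]
  · obtain ⟨x, hx⟩ : ∃ x, x ∉ V := by
      by_contra hc
      push_neg at hc
      exact hV (Finset.eq_univ_iff_forall.2 hc)
    refine mobius_sum1 V x hx _ (fun U hVU => ?_)
    by_cases h : x ∈ U
    · have hcard : U.card = (flipx x U).card + 1 := by
        simp only [flipx, if_pos h]
        exact (Finset.card_erase_add_one h).symm
      have hVle : V.card ≤ (flipx x U).card := by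
        refine Finset.card_le_card ?_
        simp only [flipx, if_pos h]
        exact Finset.subset_erase.2 ⟨hVU, hx⟩
      rw [hcard, pow_sub_succ _ _ hVle, neg_smul, neg_neg]
    · have hcard : (flipx x U).card = U.card + 1 := by
        simp only [flipx, if_neg h]
        exact Finset.card_insert_of_notMem h
      rw [hcard, pow_sub_succ _ _ (Finset.card_le_card hVU), neg_smul]


lemma aHom_bHom {α : Type} [Fintype α] (φ : ∀ U : Finset α, ↥(crSub F ↥U)) (U : Finset α) :
    epsL F (F.map (jP U).op (∑ U' : Finset α, F.map (rP U').op (φ U').1)) = (φ U).1 := by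
  rw [map_sum, map_sum]
  rw [Finset.sum_eq_single U (fun U' _ hU' => ?_) (fun hn => absurd (Finset.mem_univ _) hn)]
  · rw [← Fmap_comp, jP_rP]
    show epsL F (F.map (𝟙 (op (pt ↥U))) (φ U).1) = _
    rw [F.map_id]
    exact epsL_fix F (φ U).2
  · rw [← Fmap_comp]
    by_cases hsub : U' ⊆ U
    · have hss : U' ⊂ U := lt_of_le_of_ne hsub hU'
      obtain ⟨x, hxU, hxU'⟩ := Finset.exists_of_ssubset hss
      have hC : (Finset.univ.filter (fun u : ↥U => ↑u ∈ U')) ≠ Finset.univ := by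
        intro hc
        have := hc ▸ Finset.mem_univ (⟨x, hxU⟩ : ↥U)
        exact hxU' (Finset.mem_filter.1 this).2
      have hfact : jP U ≫ rP U'
          = eP (Finset.univ.filter (fun u : ↥U => ↑u ∈ U')) ≫ (jP U ≫ rP U') := by
        funext u
        simp only [part_comp_apply, jP, Option.bind_some]
        by_cases h : (u : α) ∈ U' <;>
          simp [eP, rP, Finset.mem_filter, h, jP]
      rw [hfact, Fmap_comp]
      exact epsL_idem F hC _
    · obtain ⟨x, hxU', hxU⟩ := Finset.not_subset.1 hsub
      have hC' : (Finset.univ.filter (fun u' : ↥U' => ↑u' ∈ U)) ≠ Finset.univ := by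
        intro hc
        have := hc ▸ Finset.mem_univ (⟨x, hxU'⟩ : ↥U')
        exact hxU (Finset.mem_filter.1 this).2
      have hfact : jP U ≫ rP U'
          = (jP U ≫ rP U') ≫ eP (Finset.univ.filter (fun u' : ↥U' => ↑u' ∈ U)) := by
        funext u
        simp only [part_comp_apply, jP, Option.bind_some]
        by_cases h : (u : α) ∈ U' <;>
          simp [eP, rP, Finset.mem_filter, h, u.2]
      rw [hfact, Fmap_comp]
      have h0 : F.map (eP (Finset.univ.filter (fun u' : ↥U' => ↑u' ∈ U))).op (φ U').1 = 0 :=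
        (φ U').2 _ hC'
      rw [h0, map_zero, map_zero]

def aH (X : FinPartᵒᵖ) : F.obj X ⟶ (PhiF (Psi F)).obj X := ModuleCat.ofHom
  { toFun := fun v => fun U => ⟨epsL F (F.map (jP U).op v), epsL_mem F _⟩
    map_add' := fun v v' => by
      funext U
      apply Subtype.ext
      show epsL F (F.map (jP U).op (v + v')) = _
      rw [map_add, map_add]
      rfl
    map_smul' := fun c v => by
      funext U
      apply Subtype.ext
      show epsL F (F.map (jP U).op (c • v)) = _
      rw [map_smul, map_smul]
      rfl }

def bH (X : FinPartᵒᵖ) : (PhiF (Psi F)).obj X ⟶ F.obj X := ModuleCat.ofHom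
  { toFun := fun φ => ∑ U : Finset X.unop.carrier, F.map (rP U).op (φ U).1
    map_add' := fun φ ψ => by
      rw [← Finset.sum_add_distrib]
      refine Finset.sum_congr rfl (fun U _ => ?_)
      show F.map (rP U).op ((φ U).1 + (ψ U).1) = _
      rw [map_add]
    map_smul' := fun c φ => by
      rw [RingHom.id_apply, Finset.smul_sum]
      refine Finset.sum_congr rfl (fun U _ => ?_)
      show F.map (rP U).op (c • (φ U).1) = _
      rw [map_smul] }

lemma aH_bH (X : FinPartᵒᵖ) (v : F.obj X) : bH F X (aH F X v) = v :=
  bHom_aHom F v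

lemma bH_aH (X : FinPartᵒᵖ) (φ : (PhiF (Psi F)).obj X) : aH F X (bH F X φ) = φ := by
  funext U
  apply Subtype.ext
  exact aHom_bHom F φ U

lemma maps_of_total {α β : Type} [Fintype α] [Fintype β] {f : α → Option β} {U : Finset α}
    (h : ∀ x ∈ U, ∃ y, f x = some y) : Maps f U (midSet f U) := by
  constructor
  · intro x hx
    obtain ⟨y, hy⟩ := h x hx
    exact ⟨y, Finset.mem_filter.2 ⟨Finset.mem_univ _, ⟨x, hx, hy⟩⟩, hy⟩
  · intro y hy
    exact (Finset.mem_filter.1 hy).2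

lemma aH_nat {α β : Type} [Fintype α] [Fintype β] (f : pt β ⟶ pt α)
    (v : F.obj (op (pt α))) (U : Finset β) :
    epsL F (F.map (jP U ≫ f).op v)
      = (PhiMapL (Psi F) f
          (fun (V : Finset α) => (⟨epsL F (F.map (jP V).op v), epsL_mem F _⟩ : ↥(crSub F ↥V))) U).1 := by
  by_cases hd : ∃ V : Finset α, Maps f U V
  · obtain ⟨V₀, h₀⟩ := hd
    have hsum : PhiMapL (Psi F) f
        (fun (V : Finset α) => (⟨epsL F (F.map (jP V).op v), epsL_mem F _⟩ : ↥(crSub F ↥V))) U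
        = (Psi F).map (msur h₀).op ⟨epsL F (F.map (jP V₀).op v), epsL_mem F _⟩ := by
      erw [PhiMapL_apply, Finset.sum_eq_single V₀
        (fun V _ hV => dif_neg (fun hM => hV (hM.unique h₀)))
        (fun hn => absurd (Finset.mem_univ _) hn), dif_pos h₀]
    rw [hsum]
    show _ = (PsiMapL F (msur h₀) ⟨epsL F (F.map (jP V₀).op v), epsL_mem F _⟩ : ↥(crSub F ↥U)).1
    rw [PsiMapL_apply]
    show _ = epsL F (F.map (tP (msur h₀)).op (epsL F (F.map (jP V₀).op v)))
    rw [eps_tP_eps, ← Fmap_comp]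
    have hcomp : jP U ≫ f = tP (msur h₀) ≫ jP V₀ := by
      funext u
      show f ↑u = (some ((msur h₀).1 u)).bind (jP V₀)
      rw [Option.bind_some]
      exact msur_spec h₀ u
    rw [hcomp]
  · have hzero : PhiMapL (Psi F) f
        (fun (V : Finset α) => (⟨epsL F (F.map (jP V).op v), epsL_mem F _⟩ : ↥(crSub F ↥V))) U
        = 0 := by
      erw [PhiMapL_apply]
      exact Finset.sum_eq_zero (fun V _ => dif_neg (fun hM => hd ⟨V, hM⟩))
    rw [hzero]
    obtain ⟨x, hxU, hfx⟩ : ∃ x ∈ U, f x = none := by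
      by_contra hc
      push_neg at hc
      refine hd ⟨midSet f U, maps_of_total (fun x hx => ?_)⟩
      cases he : f x with
      | none => exact absurd he (hc x hx)
      | some y => exact ⟨y, rfl⟩
    have hC : (Finset.univ.filter (fun u : ↥U => (f ↑u).isSome)) ≠ Finset.univ := by
      intro hc
      have := hc ▸ Finset.mem_univ (⟨x, hxU⟩ : ↥U)
      have h2 := (Finset.mem_filter.1 this).2
      rw [hfx] at h2
      simp at h2
    have hfact : jP U ≫ f
        = eP (Finset.univ.filter (fun u : ↥U => (f ↑u).isSome)) ≫ (jP U ≫ f) := by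
      funext u
      show f ↑u = (eP _ u).bind (jP U ≫ f)
      by_cases h : (f ↑u).isSome
      · rw [show eP (Finset.univ.filter (fun u : ↥U => (f ↑u).isSome)) u = some u from by
          simp [eP, Finset.mem_filter, h], Option.bind_some]
        rfl
      · rw [show eP (Finset.univ.filter (fun u : ↥U => (f ↑u).isSome)) u = none from by
          simp [eP, Finset.mem_filter, h]]
        rw [Option.not_isSome_iff_eq_none] at h
        rw [h]
        rfl
    rw [hfact, Fmap_comp]
    exact epsL_idem F hC _

lemma aH_natural {X Y : FinPartᵒᵖ} (g : X ⟶ Y) (v : F.obj X) :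
    aH F Y (F.map g v) = (PhiF (Psi F)).map g (aH F X v) := by
  funext U
  apply Subtype.ext
  show epsL F (F.map (jP U).op (F.map (g.unop).op v))
    = ((PhiMapL (Psi F) g.unop) (aH F X v) U).1
  rw [← Fmap_comp]
  exact aH_nat F g.unop v U

end UnitSec

def unitIso : 𝟭 (FinPartᵒᵖ ⥤ ModuleCat.{0} k) ≅
    (PsiFun : (FinPartᵒᵖ ⥤ ModuleCat.{0} k) ⥤ _) ⋙ Phi :=
  NatIso.ofComponents
    (fun F => NatIso.ofComponents
      (fun X => ⟨aH F X, bH F X,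
        by apply ModuleCat.hom_ext; apply LinearMap.ext; intro v; exact aH_bH F X v,
        by apply ModuleCat.hom_ext; apply LinearMap.ext; intro φ; exact bH_aH F X φ⟩)
      (fun {X Y} g => by
        apply ModuleCat.hom_ext; apply LinearMap.ext
        intro v
        exact aH_natural F g v))
    (fun {F F'} η => by
      apply NatTrans.ext
      funext X
      apply ModuleCat.hom_ext; apply LinearMap.ext
      intro v
      funext U
      apply Subtype.ext
      show epsL F' (F'.map (jP U).op (η.app X v))
        = η.app (op (pt ↥U)) (epsL F (F.map (jP U).op v))
      rw [eta_eps, nat_app])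

def mainEquiv : (FinPartᵒᵖ ⥤ ModuleCat.{0} k) ≌ (FinSurᵒᵖ ⥤ ModuleCat.{0} k) :=
  CategoryTheory.Equivalence.mk PsiFun Phi unitIso counitIso

end DP

/-- analogue of the Dold–Puppe theorem: for a field `k`, the category of
contravariant functors from `part` to `k`-vector spaces is equivalent to the category of
contravariant functors from `sur` to `k`-vector spaces. -/
theorem part_functors_equiv_sur_functors (k : Type) [Field k] :
    Nonempty ((FinPartᵒᵖ ⥤ ModuleCat.{0} k) ≌ (FinSurᵒᵖ ⥤ ModuleCat.{0} k)) :=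
  ⟨DP.mainEquiv⟩
end
end

section
/- Let k be a field of characteristic 0, sur the category of finite sets and surjective maps, and S the groupoid of finite sets and bijections with its inclusion into sur. The restriction functor O from contravariant functors sur^op → Vect_k to contravariant functors S^op → Vect_k admits a right adjoint I (given by I(P)(X) = Hom_{S^op}(k[Mor_sur(X, ·)], P)), and for every functor P : S^op → Vect_k the object I(P) is injective in the category of functors sur^op → Vect_k. -/
noncomputable section
open CategoryTheory

/-- The groupoid `S` of finite sets and bijections. -/
structure FinBij where
  carrier : Type
  [fintype : Fintype carrier]

attribute [instance] FinBij.fintype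

instance : CoeSort FinBij Type := ⟨FinBij.carrier⟩

instance : Category FinBij where
  Hom X Y := {f : X → Y // Function.Bijective f}
  id X := ⟨id, Function.bijective_id⟩
  comp f g := ⟨g.1 ∘ f.1, g.2.comp f.2⟩

/-- The inclusion `S → sur` of the groupoid of finite sets and bijections into the
category of finite sets and surjections. -/
def finBijToFinSur : FinBij ⥤ FinSur where
  obj X := ⟨X.carrier⟩
  map f := ⟨f.1, f.2.surjective⟩

/-- The restriction functor `O` from functors `surᵒᵖ → Vect_k` to functors
`Sᵒᵖ → Vect_k`, given by precomposition with the inclusion `S → sur`. -/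
def restrictionO (k : Type) [Field k] :
    (FinSurᵒᵖ ⥤ ModuleCat.{0} k) ⥤ (FinBijᵒᵖ ⥤ ModuleCat.{0} k) :=
  (Functor.whiskeringLeft FinBijᵒᵖ FinSurᵒᵖ (ModuleCat.{0} k)).obj finBijToFinSur.op

namespace StmtTwelveAux
open Opposite

abbrev Fn (n : ℕ) : FinBij := ⟨Fin n⟩
def homOfEquiv {X Y : FinBij} (e : X.carrier ≃ Y.carrier) : X ⟶ Y := ⟨e, e.bijective⟩
lemma homOfEquiv_comp {X Y Z : FinBij} (a : X.carrier ≃ Y.carrier) (b : Y.carrier ≃ Z.carrier) :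
    homOfEquiv a ≫ homOfEquiv b = homOfEquiv (a.trans b) := Subtype.ext rfl
lemma homOfEquiv_refl {X : FinBij} : homOfEquiv (Equiv.refl X.carrier) = 𝟙 X := Subtype.ext rfl
def permHom (n : ℕ) (g : Equiv.Perm (Fin n)) : Fn n ⟶ Fn n := ⟨g, g.bijective⟩
lemma permHom_comp (n : ℕ) (a b : Equiv.Perm (Fin n)) :
    permHom n a ≫ permHom n b = permHom n (b * a) := Subtype.ext rfl
lemma permHom_one (n : ℕ) : permHom n 1 = 𝟙 (Fn n) := Subtype.ext rfl

variable {k : Type} [Field k]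

def mapL (M : FinBijᵒᵖ ⥤ ModuleCat.{0} k) {A B : FinBij} (φ : A ⟶ B) :
    M.obj (op B) →ₗ[k] M.obj (op A) := (M.map φ.op).hom
lemma mapL_comp (M : FinBijᵒᵖ ⥤ ModuleCat.{0} k) {A B C : FinBij} (φ : A ⟶ B) (ψ : B ⟶ C)
    (x : M.obj (op C)) : mapL M φ (mapL M ψ x) = mapL M (φ ≫ ψ) x := by
  show (M.map ψ.op ≫ M.map φ.op).hom x = _
  rw [← M.map_comp]; rfl
lemma mapL_id (M : FinBijᵒᵖ ⥤ ModuleCat.{0} k) {A : FinBij} (x : M.obj (op A)) :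
    mapL M (𝟙 A) x = x := by
  show (M.map (𝟙 (op A))).hom x = x
  rw [M.map_id]; rfl
lemma mapL_natural {M N : FinBijᵒᵖ ⥤ ModuleCat.{0} k} (f : M ⟶ N) {A B : FinBij} (φ : A ⟶ B)
    (x : M.obj (op B)) :
    f.app (op A) (mapL M φ x) = mapL N φ (f.app (op B) x) :=
  LinearMap.congr_fun (congrArg ModuleCat.Hom.hom (f.naturality φ.op)) x

section
variable {M N : FinBijᵒᵖ ⥤ ModuleCat.{0} k}
  (s : ∀ n : ℕ, (N.obj (op (Fn n)) →ₗ[k] M.obj (op (Fn n))))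

def tmap (n : ℕ) : N.obj (op (Fn n)) →ₗ[k] M.obj (op (Fn n)) :=
  (Fintype.card (Equiv.Perm (Fin n)) : k)⁻¹ •
    ∑ g : Equiv.Perm (Fin n),
      (mapL M (permHom n g)).comp ((s n).comp (mapL N (permHom n g⁻¹)))

lemma tmap_apply (n : ℕ) (x : N.obj (op (Fn n))) :
    tmap s n x = (Fintype.card (Equiv.Perm (Fin n)) : k)⁻¹ •
      ∑ g : Equiv.Perm (Fin n), mapL M (permHom n g) (s n (mapL N (permHom n g⁻¹) x)) := by
  simp [tmap, LinearMap.sum_apply]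

lemma tmap_conj (n : ℕ) (p : Equiv.Perm (Fin n)) (x : N.obj (op (Fn n))) :
    tmap s n (mapL N (permHom n p) x) = mapL M (permHom n p) (tmap s n x) := by
  rw [tmap_apply, tmap_apply, map_smul, map_sum]
  congr 1
  refine (Fintype.sum_equiv (Equiv.mulRight p) _ _ fun h => ?_).symm
  rw [mapL_comp M (permHom n p) (permHom n h), permHom_comp]
  rw [mapL_comp N (permHom n ((Equiv.mulRight p) h)⁻¹) (permHom n p), permHom_comp]
  have h1 : (h : Equiv.Perm (Fin n)) * p = ((Equiv.mulRight p) h) := rfl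
  have h2 : p * ((Equiv.mulRight p) h)⁻¹ = h⁻¹ := by
    simp [Equiv.mulRight, mul_inv_rev]
  rw [h1, h2]

variable [CharZero k]

lemma tmap_retract (f : M ⟶ N)
    (hs : ∀ n : ℕ, (s n).comp ((f.app (op (Fn n))).hom : M.obj (op (Fn n)) →ₗ[k] N.obj (op (Fn n)))
        = LinearMap.id)
    (n : ℕ) (y : M.obj (op (Fn n))) :
    tmap s n (f.app (op (Fn n)) y) = y := by
  rw [tmap_apply]
  have key : ∀ g : Equiv.Perm (Fin n),
      mapL M (permHom n g) (s n (mapL N (permHom n g⁻¹) (f.app (op (Fn n)) y))) = y := by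
    intro g
    rw [← mapL_natural f (permHom n g⁻¹) y]
    have := DFunLike.congr_fun (hs n) (mapL M (permHom n g⁻¹) y)
    rw [LinearMap.comp_apply] at this
    rw [this]
    show mapL M (permHom n g) (mapL M (permHom n g⁻¹) y) = y
    rw [mapL_comp, permHom_comp, inv_mul_cancel, permHom_one, mapL_id]
  rw [Finset.sum_congr rfl fun g _ => key g, Finset.sum_const, Finset.card_univ,
    ← Nat.cast_smul_eq_nsmul k, smul_smul, inv_mul_cancel₀, one_smul]
  exact Nat.cast_ne_zero.mpr Fintype.card_ne_zero

lemma tmap_conj_hom {m n : ℕ} (α : Fn m ⟶ Fn n) (β : Fn n ⟶ Fn m)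
    (hαβ : α ≫ β = 𝟙 (Fn m)) (x : N.obj (op (Fn m))) :
    mapL M α (tmap s n (mapL N β x)) = tmap s m x := by
  have hmn : m = n := by
    have h1 : Fintype.card (Fin m) = Fintype.card (Fin n) :=
      Fintype.card_congr (Equiv.ofBijective α.1 α.2)
    simpa using h1
  subst hmn
  have hβ : β = permHom m (Equiv.ofBijective β.1 β.2) := Subtype.ext rfl
  rw [hβ, tmap_conj, ← hβ, mapL_comp, hαβ, mapL_id]

end
end StmtTwelveAux

namespace StmtTwelveAux
open Opposite
variable {k : Type} [Field k] [CharZero k]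

lemma exists_retraction {M N : FinBijᵒᵖ ⥤ ModuleCat.{0} k} (f : M ⟶ N) [Mono f] :
    ∃ r : N ⟶ M, f ≫ r = 𝟙 M := by
  have hinj : ∀ X : FinBijᵒᵖ, Function.Injective (f.app X) := fun X =>
    (ModuleCat.mono_iff_injective (f.app X)).mp inferInstance
  choose s hs using fun n : ℕ =>
    LinearMap.exists_leftInverse_of_injective
      ((f.app (op (Fn n))).hom : M.obj (op (Fn n)) →ₗ[k] N.obj (op (Fn n)))
      (LinearMap.ker_eq_bot.mpr (hinj _))
  let σ : ∀ Z : FinBij, Z ⟶ Fn (Fintype.card Z.carrier) := fun Z =>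
    homOfEquiv (Fintype.equivFin Z.carrier)
  let σ' : ∀ Z : FinBij, Fn (Fintype.card Z.carrier) ⟶ Z := fun Z =>
    homOfEquiv (X := Fn (Fintype.card Z.carrier)) (Fintype.equivFin Z.carrier).symm
  let rApp : ∀ X : FinBijᵒᵖ, N.obj X ⟶ M.obj X := fun X =>
    ModuleCat.ofHom ((mapL M (σ X.unop) ∘ₗ tmap s (Fintype.card X.unop.carrier)) ∘ₗ mapL N (σ' X.unop))
  refine ⟨⟨rApp, ?_⟩, ?_⟩
  · intro X Y u
    refine ModuleCat.hom_ext (LinearMap.ext fun x => ?_)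
    set φ : Y.unop ⟶ X.unop := u.unop with hφ
    set m := Fintype.card Y.unop.carrier with hm
    set n := Fintype.card X.unop.carrier with hn
    set eφ : Y.unop.carrier ≃ X.unop.carrier := Equiv.ofBijective φ.1 φ.2 with heφ
    have hφ' : φ = homOfEquiv eφ := Subtype.ext rfl
    set E : Fin m ≃ Fin n :=
      (Fintype.equivFin Y.unop.carrier).symm.trans
        (eφ.trans (Fintype.equivFin X.unop.carrier)) with hE
    set γ : Fn m ⟶ Fn n := homOfEquiv (X := Fn m) (Y := Fn n) E with hγ
    set γ' : Fn n ⟶ Fn m := homOfEquiv (X := Fn n) (Y := Fn m) E.symm with hγ'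
    have hEE : γ ≫ γ' = 𝟙 (Fn m) := by
      rw [hγ, hγ', homOfEquiv_comp, Equiv.self_trans_symm, homOfEquiv_refl]
    show mapL M (σ Y.unop) (tmap s m (mapL N (σ' Y.unop) (mapL N φ x)))
      = mapL M φ (mapL M (σ X.unop) (tmap s n (mapL N (σ' X.unop) x)))
    rw [← tmap_conj_hom s γ γ' hEE (mapL N (σ' Y.unop) (mapL N φ x))]
    rw [mapL_comp M (σ Y.unop) γ,
      mapL_comp N (σ' Y.unop) φ,
      mapL_comp N γ' (σ' Y.unop ≫ φ),
      mapL_comp M φ (σ X.unop)]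
    have key1 : σ Y.unop ≫ γ = φ ≫ σ X.unop := by
      rw [hγ, hφ']
      show homOfEquiv _ ≫ homOfEquiv _ = homOfEquiv _ ≫ homOfEquiv _
      rw [homOfEquiv_comp, homOfEquiv_comp]
      congr 1
      refine Equiv.ext fun z => ?_
      rw [hE]
      simp only [Equiv.trans_apply, Equiv.symm_trans_apply, Equiv.symm_apply_apply,
        Equiv.apply_symm_apply, Equiv.symm_symm]
    have key2 : γ' ≫ (σ' Y.unop ≫ φ) = σ' X.unop := by
      rw [hγ', hφ']
      show homOfEquiv _ ≫ (homOfEquiv _ ≫ homOfEquiv _) = homOfEquiv _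
      rw [homOfEquiv_comp, homOfEquiv_comp]
      congr 1
      refine Equiv.ext fun z => ?_
      rw [hE]
      simp only [Equiv.trans_apply, Equiv.symm_trans_apply, Equiv.symm_apply_apply,
        Equiv.apply_symm_apply, Equiv.symm_symm]
    rw [key1, key2]
  · refine NatTrans.ext (funext fun X => ?_)
    refine ModuleCat.hom_ext (LinearMap.ext fun y => ?_)
    show mapL M (σ X.unop) (tmap s (Fintype.card X.unop.carrier)
      (mapL N (σ' X.unop) (f.app (op X.unop) y))) = y
    rw [← mapL_natural f (σ' X.unop) y]
    rw [tmap_retract s f hs _ (mapL M (σ' X.unop) y)]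
    rw [mapL_comp, homOfEquiv_comp, Equiv.self_trans_symm, homOfEquiv_refl, mapL_id]

lemma allInjective (P : FinBijᵒᵖ ⥤ ModuleCat.{0} k) : Injective P where
  factors g f _ := by
    obtain ⟨r, hr⟩ := exists_retraction f
    exact ⟨r ≫ g, by rw [← Category.assoc, hr, Category.id_comp]⟩

end StmtTwelveAux

namespace StmtTwelveAux
open Opposite

def isoOfEquiv {X Y : FinBij} (e : X.carrier ≃ Y.carrier) : X ≅ Y where
  hom := homOfEquiv e
  inv := homOfEquiv e.symm
  hom_inv_id := by rw [homOfEquiv_comp, Equiv.self_trans_symm, homOfEquiv_refl]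
  inv_hom_id := by rw [homOfEquiv_comp, Equiv.symm_trans_self, homOfEquiv_refl]

/-- A small skeleton of `FinBij`. -/
structure SkBij where
  n : ℕ

instance : SmallCategory SkBij where
  Hom a b := {f : Fin a.n → Fin b.n // Function.Bijective f}
  id a := ⟨id, Function.bijective_id⟩
  comp f g := ⟨g.1 ∘ f.1, g.2.comp f.2⟩

def skToBij : SkBij ⥤ FinBij where
  obj a := Fn a.n
  map f := f

instance : skToBij.Full := ⟨fun f => ⟨f, rfl⟩⟩
instance : skToBij.Faithful := ⟨fun h => h⟩
instance : skToBij.EssSurj :=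
  ⟨fun Y => ⟨⟨Fintype.card Y.carrier⟩, ⟨isoOfEquiv (Fintype.equivFin Y.carrier).symm⟩⟩⟩
instance : skToBij.IsEquivalence := {}

instance hasLimitsOfShapeStructuredArrow (k : Type) [Field k] (Y : FinSurᵒᵖ) :
    Limits.HasLimitsOfShape (StructuredArrow Y finBijToFinSur.op) (ModuleCat.{0} k) :=
  Limits.hasLimitsOfShape_of_equivalence
    (StructuredArrow.pre Y skToBij.op finBijToFinSur.op).asEquivalence

instance (k : Type) [Field k] :
    ((Functor.whiskeringLeft FinBijᵒᵖ FinSurᵒᵖ (ModuleCat.{0} k)).obj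
      finBijToFinSur.op).PreservesMonomorphisms where
  preserves := fun {A B} f hf => by
    haveI := hf
    haveI : ∀ X : FinBijᵒᵖ,
        Mono ((((Functor.whiskeringLeft FinBijᵒᵖ FinSurᵒᵖ (ModuleCat.{0} k)).obj
          finBijToFinSur.op).map f).app X) := fun X => by
      show Mono (f.app (finBijToFinSur.op.obj X))
      infer_instance
    exact NatTrans.mono_of_mono_app _

instance hasRKE (k : Type) [Field k] (F : FinBijᵒᵖ ⥤ ModuleCat.{0} k) :
    finBijToFinSur.op.HasRightKanExtension F := by
  haveI : Functor.HasPointwiseRightKanExtension finBijToFinSur.op F := fun Y => inferInstance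
  infer_instance

end StmtTwelveAux

/-- the restriction functor `O : (surᵒᵖ ⥤ Vect_k) ⥤ (Sᵒᵖ ⥤ Vect_k)` admits
a right adjoint `I`, and for every `P : Sᵒᵖ ⥤ Vect_k` the object `I(P)` is injective in
the category of functors `surᵒᵖ ⥤ Vect_k`. -/
theorem restriction_has_right_adjoint_with_injective_values
    (k : Type) [Field k] [CharZero k] :
    ∃ (I : (FinBijᵒᵖ ⥤ ModuleCat.{0} k) ⥤ (FinSurᵒᵖ ⥤ ModuleCat.{0} k))
      (_ : restrictionO k ⊣ I),
      ∀ P : FinBijᵒᵖ ⥤ ModuleCat.{0} k, Injective (I.obj P) := by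
  refine ⟨finBijToFinSur.op.ran, finBijToFinSur.op.ranAdjunction (ModuleCat.{0} k),
    fun P => ?_⟩
  haveI : Injective P := StmtTwelveAux.allInjective P
  exact Injective.injective_of_adjoint (finBijToFinSur.op.ranAdjunction (ModuleCat.{0} k)) P
end
end

section
/- Let k be a field of characteristic 0, sur the category of finite sets and surjective maps, S the groupoid of finite sets and bijections, O the restriction functor from functors sur^op → Vect_k to functors S^op → Vect_k, and I its right adjoint. Then for every functor M : sur^op → Vect_k the unit morphism M → I(O(M)) of the adjunction is a monomorphism; consequently every object of the category of functors sur^op → Vect_k embeds into an injective object of the form I(P), so this category has enough injectives. -/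
noncomputable section
open CategoryTheory

namespace SurPf
open Opposite CategoryTheory.Limits
open Classical in
/-- morphism in `FinBij` from an equiv of carriers -/
def bijHom {X Y : FinBij} (e : X.carrier ≃ Y.carrier) : X ⟶ Y := ⟨e, e.bijective⟩

lemma bijHom_comp {X Y Z : FinBij} (e : X.carrier ≃ Y.carrier) (f : Y.carrier ≃ Z.carrier) :
    bijHom e ≫ bijHom f = bijHom (e.trans f) := Subtype.ext rfl

lemma bijHom_refl (X : FinBij) : bijHom (Equiv.refl X.carrier) = 𝟙 X := Subtype.ext rfl

instance essSmallSA (d : FinSurᵒᵖ) :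
    EssentiallySmall.{0} (StructuredArrow d finBijToFinSur.op) := by
  classical
  refine (essentiallySmall_iff _).2 ⟨?_, inferInstance⟩
  let φ : (Σ n : ℕ, (Fin n → d.unop.carrier)) →
      Skeleton (StructuredArrow d finBijToFinSur.op) := fun p =>
    if h : Function.Surjective p.2 then
      toSkeleton (StructuredArrow.mk (Y := op (⟨Fin p.1⟩ : FinBij))
        (Quiver.Hom.op (⟨p.2, h⟩ : (⟨Fin p.1⟩ : FinSur) ⟶ d.unop)))
    else
      toSkeleton (StructuredArrow.mk (Y := op (⟨d.unop.carrier⟩ : FinBij))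
        (Quiver.Hom.op (𝟙 d.unop)))
  apply small_of_surjective (f := φ)
  intro s
  obtain ⟨T, rfl⟩ := Quotient.exists_rep s
  set Y : FinBij := T.right.unop with hY
  set u := T.hom
  let n := Fintype.card Y.carrier
  let e : Y.carrier ≃ Fin n := Fintype.equivFin Y.carrier
  have hsurj : Function.Surjective (u.unop.1 ∘ e.symm) :=
    u.unop.2.comp e.symm.surjective
  refine ⟨⟨n, u.unop.1 ∘ e.symm⟩, ?_⟩
  show φ _ = _
  simp only [φ]
  rw [dif_pos hsurj]
  refine Quotient.sound ⟨StructuredArrow.isoMk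
    (Iso.op (⟨bijHom e, bijHom e.symm, Subtype.ext (funext fun x => e.symm_apply_apply x),
      Subtype.ext (funext fun x => e.apply_symm_apply x)⟩ : Y ≅ ⟨Fin n⟩)) ?_⟩
  apply Quiver.Hom.unop_inj
  apply Subtype.ext
  funext x
  exact congrArg u.unop.1 (e.symm_apply_apply x)

section
variable (k : Type) [Field k]

instance (d : FinSurᵒᵖ) : HasLimitsOfShape (StructuredArrow d finBijToFinSur.op) (ModuleCat.{0} k) :=
  hasLimitsOfShape_of_essentiallySmall _ _

instance (F : FinBijᵒᵖ ⥤ ModuleCat.{0} k) : finBijToFinSur.op.HasRightKanExtension F := by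
  have : finBijToFinSur.op.HasPointwiseRightKanExtension F := fun d => inferInstance
  infer_instance

noncomputable instance fintypeEquivAux (alpha beta : Type) [Finite alpha] [Finite beta] :
    Fintype (alpha ≃ beta) := Fintype.ofFinite _

/-- the standard finite set with `n` elements as an object of `FinBij` -/
abbrev finN (n : ℕ) : FinBij := ⟨Fin n⟩

variable {k}

section Avg

variable {A B : FinBijᵒᵖ ⥤ ModuleCat.{0} k}
  (r0 : ∀ n : ℕ, (B.obj (op (finN n)) ⟶ A.obj (op (finN n))))

lemma map_map_op (A : FinBijᵒᵖ ⥤ ModuleCat.{0} k) {X Y Z : FinBij}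
    (e : X.carrier ≃ Y.carrier) (f : Y.carrier ≃ Z.carrier) :
    A.map (bijHom f).op ≫ A.map (bijHom e).op = A.map (bijHom (e.trans f)).op := by
  rw [← A.map_comp, ← op_comp, bijHom_comp]

/-- one conjugate of `r0` -/
def conj (X : FinBij) {n : ℕ} (ρ : Fin n ≃ X.carrier) : B.obj (op X) ⟶ A.obj (op X) :=
  B.map ((bijHom ρ : finN n ⟶ X)).op ≫ r0 n ≫ A.map ((bijHom ρ.symm : X ⟶ finN n)).op

lemma conj_natural {X Y : FinBij} (g : X.carrier ≃ Y.carrier) {n : ℕ} (ρ : Fin n ≃ X.carrier) :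
    B.map (bijHom g).op ≫ conj r0 X ρ = conj r0 Y (ρ.trans g) ≫ A.map (bijHom g).op := by
  unfold conj
  have hA : A.map ((bijHom (ρ.trans g).symm : Y ⟶ finN n)).op ≫ A.map (bijHom g).op
      = A.map ((bijHom ρ.symm : X ⟶ finN n)).op := by
    rw [map_map_op]
    have hEq : g.trans (ρ.trans g).symm = ρ.symm := Equiv.ext fun x => by
      simp only [Equiv.trans_apply, Equiv.symm_trans_apply, Equiv.symm_apply_apply]
    exact congrArg (fun t => (A.map ((bijHom t : X ⟶ finN n)).op)) hEq
  rw [← Category.assoc, map_map_op]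
  simp only [Category.assoc]
  rw [hA]

/-- the averaged retraction candidate -/
def rApp (n : ℕ) (X : FinBij) : B.obj (op X) ⟶ A.obj (op X) :=
  ((Nat.factorial n : k)⁻¹) • ∑ ρ : Fin n ≃ X.carrier, conj r0 X ρ

lemma rApp_natural (n : ℕ) {X Y : FinBij} (g : X.carrier ≃ Y.carrier) :
    B.map (bijHom g).op ≫ rApp r0 n X = rApp r0 n Y ≫ A.map (bijHom g).op := by
  unfold rApp
  rw [Linear.comp_smul, Linear.smul_comp]
  congr 1
  rw [Preadditive.comp_sum, Preadditive.sum_comp]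
  refine Fintype.sum_equiv (Equiv.equivCongr (Equiv.refl _) g) _ _ (fun ρ => ?_)
  rw [conj_natural]
  have hEq : ρ.trans g = (Equiv.equivCongr (Equiv.refl (Fin n)) g) ρ := Equiv.ext fun x => rfl
  exact congrArg (fun t => conj r0 Y t ≫ A.map (bijHom g).op) hEq

variable (f : A ⟶ B)

lemma conj_retract (hr0 : ∀ n, f.app (op (finN n)) ≫ r0 n = 𝟙 _)
    {X : FinBij} {n : ℕ} (ρ : Fin n ≃ X.carrier) :
    f.app (op X) ≫ conj r0 X ρ = 𝟙 _ := by
  unfold conj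
  rw [← Category.assoc, ← f.naturality, Category.assoc, ← Category.assoc (f.app _), hr0,
    Category.id_comp, map_map_op]
  have : (ρ.symm.trans ρ) = Equiv.refl X.carrier := Equiv.ext fun x => by simp
  rw [this, bijHom_refl, op_id, A.map_id]

lemma rApp_retract [CharZero k] (hr0 : ∀ n, f.app (op (finN n)) ≫ r0 n = 𝟙 _) (X : FinBij) :
    f.app (op X) ≫ rApp r0 (Fintype.card X.carrier) X = 𝟙 _ := by
  unfold rApp
  rw [Linear.comp_smul, Preadditive.comp_sum]
  have h1 : ∀ ρ ∈ (Finset.univ : Finset (Fin (Fintype.card X.carrier) ≃ X.carrier)),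
      f.app (op X) ≫ conj r0 X ρ = 𝟙 (A.obj (op X)) := fun ρ _ => conj_retract r0 f hr0 ρ
  rw [Finset.sum_congr rfl h1, Finset.sum_const, Finset.card_univ]
  have hcard : Fintype.card (Fin (Fintype.card X.carrier) ≃ X.carrier)
      = Nat.factorial (Fintype.card X.carrier) := by
    classical
    have h := Fintype.card_equiv (α := Fin (Fintype.card X.carrier)) (β := X.carrier)
      ((Fintype.equivFin X.carrier).symm)
    rw [Fintype.card_fin] at h
    convert h using 2
  rw [hcard]
  rw [← Nat.cast_smul_eq_nsmul k, smul_smul,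
    inv_mul_cancel₀ (Nat.cast_ne_zero.2 (Nat.factorial_ne_zero _)), one_smul]

end Avg

variable [CharZero k]

lemma exists_retraction {A B : FinBijᵒᵖ ⥤ ModuleCat.{0} k} (f : A ⟶ B) [Mono f] :
    ∃ r : B ⟶ A, f ≫ r = 𝟙 A := by
  have h1 : ∀ n : ℕ, ∃ r0 : B.obj (op (finN n)) ⟶ A.obj (op (finN n)),
      f.app (op (finN n)) ≫ r0 = 𝟙 _ := by
    intro n
    have hm : Mono (f.app (op (finN n))) := inferInstance
    have hinj := (ModuleCat.mono_iff_injective _).1 hm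
    obtain ⟨g, hg⟩ := LinearMap.exists_leftInverse_of_injective (f.app (op (finN n))).hom
      (LinearMap.ker_eq_bot.mpr hinj)
    exact ⟨ModuleCat.ofHom g, by ext x; exact LinearMap.ext_iff.1 hg x⟩
  choose r0 hr0 using h1
  refine ⟨{ app := fun W => rApp r0 (Fintype.card W.unop.carrier) W.unop
            naturality := ?_ }, ?_⟩
  · intro W W' u
    let g : W'.unop.carrier ≃ W.unop.carrier := Equiv.ofBijective u.unop.1 u.unop.2
    have hu : (bijHom g).op = u := by
      have : bijHom g = u.unop := Subtype.ext rfl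
      rw [this, Quiver.Hom.op_unop]
    have hnat := rApp_natural r0 (Fintype.card W'.unop.carrier) g
    rw [hu] at hnat
    have hc : Fintype.card W'.unop.carrier = Fintype.card W.unop.carrier :=
      Fintype.card_congr g
    rw [← hc]
    exact hnat
  · apply NatTrans.ext
    funext W
    exact rApp_retract r0 f hr0 W.unop

lemma allInjective (A : FinBijᵒᵖ ⥤ ModuleCat.{0} k) : Injective A := by
  constructor
  intro U V g i hi
  obtain ⟨r, hr⟩ := exists_retraction i
  exact ⟨r ≫ g, by rw [← Category.assoc, hr, Category.id_comp]⟩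

instance : (restrictionO k).PreservesMonomorphisms := by
  constructor
  intro F G f hf
  haveI : ∀ Y : FinBijᵒᵖ, Mono (((restrictionO k).map f).app Y) := by
    intro Y
    show Mono (f.app (finBijToFinSur.op.obj Y))
    infer_instance
  exact NatTrans.mono_of_mono_app _

end
end SurPf

theorem unit_mono_and_enough_injectives' (k : Type) [Field k] [CharZero k] :
    (∃ (I : (FinBijᵒᵖ ⥤ ModuleCat.{0} k) ⥤ (FinSurᵒᵖ ⥤ ModuleCat.{0} k))
       (adj : restrictionO k ⊣ I),
       ∀ M : FinSurᵒᵖ ⥤ ModuleCat.{0} k,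
         Mono (adj.unit.app M) ∧ Injective (I.obj ((restrictionO k).obj M)))
    ∧ EnoughInjectives (FinSurᵒᵖ ⥤ ModuleCat.{0} k) := by
  open SurPf in
  let L := finBijToFinSur.op
  let I : (FinBijᵒᵖ ⥤ ModuleCat.{0} k) ⥤ (FinSurᵒᵖ ⥤ ModuleCat.{0} k) := L.ran
  let adj : restrictionO k ⊣ I := L.ranAdjunction (ModuleCat.{0} k)
  have key : ∀ M : FinSurᵒᵖ ⥤ ModuleCat.{0} k,
      Mono (adj.unit.app M) ∧ Injective (I.obj ((restrictionO k).obj M)) := by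
    intro M
    constructor
    · haveI : ∀ W : FinSurᵒᵖ, Mono ((adj.unit.app M).app W) := by
        intro W
        have h := L.ranCounit_app_app_ranAdjunction_unit_app_app M
          (Opposite.op (⟨W.unop.carrier⟩ : FinBij))
        have h' : (adj.unit.app M).app W ≫
            (L.ranCounit.app (L ⋙ M)).app (Opposite.op (⟨W.unop.carrier⟩ : FinBij)) = 𝟙 _ := h
        have : Mono ((adj.unit.app M).app W ≫
            (L.ranCounit.app (L ⋙ M)).app (Opposite.op (⟨W.unop.carrier⟩ : FinBij))) := by
          rw [h']; exact inferInstanceAs (Mono (𝟙 (M.obj W)))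
        exact mono_of_mono _ ((L.ranCounit.app (L ⋙ M)).app
          (Opposite.op (⟨W.unop.carrier⟩ : FinBij)))
      exact NatTrans.mono_of_mono_app _
    · have := SurPf.allInjective (k := k) ((restrictionO k).obj M)
      exact Injective.injective_of_adjoint adj _
  refine ⟨⟨I, adj, key⟩, ?_⟩
  constructor
  intro M
  exact ⟨{ J := I.obj ((restrictionO k).obj M)
           injective := (key M).2
           f := adj.unit.app M
           mono := (key M).1 }⟩
/-- for the right adjoint `I` of the restriction functor `O`, the unit
`M → I(O(M))` of the adjunction is a monomorphism for every `M : surᵒᵖ ⥤ Vect_k`; thus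
every object embeds into an injective object of the form `I(P)`, and the category of
functors `surᵒᵖ ⥤ Vect_k` has enough injectives. -/
theorem unit_mono_and_enough_injectives (k : Type) [Field k] [CharZero k] :
    (∃ (I : (FinBijᵒᵖ ⥤ ModuleCat.{0} k) ⥤ (FinSurᵒᵖ ⥤ ModuleCat.{0} k))
       (adj : restrictionO k ⊣ I),
       ∀ M : FinSurᵒᵖ ⥤ ModuleCat.{0} k,
         Mono (adj.unit.app M) ∧ Injective (I.obj ((restrictionO k).obj M)))
    ∧ EnoughInjectives (FinSurᵒᵖ ⥤ ModuleCat.{0} k) := by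
  exact unit_mono_and_enough_injectives' k
end
end
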